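/- arXiv:2301.13092 — 3 statements merged into one kernel-verified Lean document; each statement's English description precedes it below -/
import Mathlib

section
/- Let π be an irreducible ψ-generic representation of SO_{2l}(F_q) with normalized Bessel function B_{π,ψ}. If t ∈ T_{SO_{2l}} (the diagonal torus of SO_{2l}(F_q)) satisfies B_{π,ψ}(t) ≠ 0, then t lies in the center of SO_{2l}(F_q), i.e. t = ±I_{2l}. -/
/-!
Common definitions for formalizing "A Converse Theorem for Split SO(2l) over Finite Fields"
(Hazeltine–Liu).  We work with the split special orthogonal groups realized as sets of
matrices over a finite field `F` of odd characteristic, and with complex representations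
encoded as functions from matrices to linear endomorphisms that are multiplicative on the
relevant matrix group.
-/

open scoped Classical BigOperators

noncomputable section

namespace SOConverse

/-- Entry of a square matrix indexed by natural numbers (`0` out of range). -/
def ent {F : Type} [Zero F] {m : ℕ} (A : Matrix (Fin m) (Fin m) F) (i j : ℕ) : F :=
  if h : i < m ∧ j < m then A ⟨i, h.1⟩ ⟨j, h.2⟩ else 0

/-- The antidiagonal `m × m` matrix `J_m`. -/
def matJ (F : Type) [Field F] (m : ℕ) : Matrix (Fin m) (Fin m) F :=
  Matrix.of fun i j => if (i : ℕ) + (j : ℕ) + 1 = m then 1 else 0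

/-- The split special orthogonal group `SO_m(F) = {g : det g = 1, ᵗg J g = J}`. -/
def SOset (F : Type) [Field F] (m : ℕ) : Set (Matrix (Fin m) (Fin m) F) :=
  {g | g.det = 1 ∧ g.transpose * matJ F m * g = matJ F m}

/-- `GL_n(F)` as the set of invertible matrices. -/
def GLset (F : Type) [Field F] (n : ℕ) : Set (Matrix (Fin n) (Fin n) F) :=
  {g | IsUnit g.det}

/-- Upper triangular unipotent matrices. -/
def upperUnip (F : Type) [Field F] (m : ℕ) : Set (Matrix (Fin m) (Fin m) F) :=
  {u | (∀ i j : Fin m, (j : ℕ) < (i : ℕ) → u i j = 0) ∧ ∀ i : Fin m, u i i = 1}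

/-- The upper triangular unipotent subgroup `U_{SO_{2l}}`. -/
def USO (F : Type) [Field F] (l : ℕ) : Set (Matrix (Fin (2*l)) (Fin (2*l)) F) :=
  upperUnip F (2*l) ∩ SOset F (2*l)

/-- Invertible diagonal matrices. -/
def diagSet (F : Type) [Field F] (m : ℕ) : Set (Matrix (Fin m) (Fin m) F) :=
  {t | (∀ i j : Fin m, i ≠ j → t i j = 0) ∧ IsUnit t.det}

/-- The diagonal torus `T_{SO_{2l}}`. -/
def TSO (F : Type) [Field F] (l : ℕ) : Set (Matrix (Fin (2*l)) (Fin (2*l)) F) :=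
  diagSet F (2*l) ∩ SOset F (2*l)

/-- The Borel subgroup `B_{SO_{2l}} = T_{SO_{2l}} U_{SO_{2l}}`. -/
def BSO (F : Type) [Field F] (l : ℕ) : Set (Matrix (Fin (2*l)) (Fin (2*l)) F) :=
  {b | ∃ t ∈ TSO F l, ∃ u ∈ USO F l, b = t * u}

/-- The generic character `ψ(u) = ψ(∑_{i=1}^{l-2} u_{i,i+1} + (1/4)u_{l-1,l} - (1/2)u_{l-1,l+1})`
on `U_{SO_{2l}}` (1-based indices as in the paper). -/
def soPsi (F : Type) [Field F] (ψ : AddChar F ℂ) (l : ℕ)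
    (u : Matrix (Fin (2*l)) (Fin (2*l)) F) : ℂ :=
  ψ ((∑ i ∈ Finset.range (l-2), ent u i (i+1))
      + (4 : F)⁻¹ * ent u (l-2) (l-1) - (2 : F)⁻¹ * ent u (l-2) l)

/-- The generic character `ψ(u) = ψ(∑ u_{i,i+1})` on `U_{GL_n}`. -/
def glPsi (F : Type) [Field F] (ψ : AddChar F ℂ) (n : ℕ)
    (u : Matrix (Fin n) (Fin n) F) : ℂ :=
  ψ (∑ i ∈ Finset.range (n-1), ent u i (i+1))

/-- The character `ψ⁻¹(u) = ψ(-∑ u_{i,i+1})` on `U_{GL_n}`. -/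
def glPsiInv (F : Type) [Field F] (ψ : AddChar F ℂ) (n : ℕ)
    (u : Matrix (Fin n) (Fin n) F) : ℂ :=
  ψ (-(∑ i ∈ Finset.range (n-1), ent u i (i+1)))

/-- A complex representation of the subset `S` of `m × m` matrices over `F`:
a finite-dimensional complex vector space together with a map to linear endomorphisms
which is multiplicative on `S`. -/
structure FRep (F : Type) [Field F] (m : ℕ) (S : Set (Matrix (Fin m) (Fin m) F)) where
  V : Type
  [grp : AddCommGroup V]
  [mod : Module ℂ V]
  [fd : FiniteDimensional ℂ V]
  ρ : Matrix (Fin m) (Fin m) F → (V →ₗ[ℂ] V)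
  map_one : ρ 1 = LinearMap.id
  map_mul : ∀ g ∈ S, ∀ h ∈ S, ρ (g * h) = (ρ g).comp (ρ h)

attribute [instance] FRep.grp FRep.mod FRep.fd

/-- Irreducibility: `V ≠ 0` and the only invariant subspaces are `⊥` and `⊤`. -/
def FRep.Irreducible {F : Type} [Field F] {m : ℕ} {S : Set (Matrix (Fin m) (Fin m) F)}
    (π : FRep F m S) : Prop :=
  (∃ v : π.V, v ≠ 0) ∧
    ∀ W : Submodule ℂ π.V, (∀ g ∈ S, ∀ v ∈ W, π.ρ g v ∈ W) → W = ⊥ ∨ W = ⊤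

/-- The unipotent radical of the standard (block upper-triangular) parabolic subgroup of
`SO_m` determined by the set `C` of cut points. -/
def blockUnipRad (F : Type) [Field F] (m : ℕ) (C : Finset ℕ) :
    Set (Matrix (Fin m) (Fin m) F) :=
  {u | u ∈ SOset F m ∧ (∀ i : Fin m, u i i = 1) ∧
    ∀ i j : Fin m, i ≠ j → u i j ≠ 0 → ∃ c ∈ C, (i : ℕ) < c ∧ c ≤ (j : ℕ)}

/-- Cuspidality: `∑_{u ∈ N} π(u) = 0` for the unipotent radical `N` of every proper standard
parabolic subgroup of `SO_m` (given by a nonempty symmetric set of cuts). -/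
def Cuspidal (F : Type) [Field F] [Fintype F] {m : ℕ} (π : FRep F m (SOset F m)) : Prop :=
  ∀ C : Finset ℕ, C.Nonempty → (∀ c ∈ C, 0 < c ∧ c < m ∧ m - c ∈ C) →
    (∑ u : Matrix (Fin m) (Fin m) F,
        (if u ∈ blockUnipRad F m C then π.ρ u else 0)) = 0

section WhBessel

variable (F : Type) [Field F] [Fintype F] (ψ : AddChar F ℂ) (l : ℕ)
variable {V : Type} [AddCommGroup V] [Module ℂ V]

/-- A nonzero `ψ`-Whittaker functional for the action `ρ`. -/
def WhFunctional (ρ : Matrix (Fin (2*l)) (Fin (2*l)) F → (V →ₗ[ℂ] V))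
    (Γ : V →ₗ[ℂ] ℂ) : Prop :=
  Γ ≠ 0 ∧ ∀ u ∈ USO F l, ∀ v : V, Γ (ρ u v) = soPsi F ψ l u * Γ v

/-- `ψ`-genericity. -/
def GenericOf (ρ : Matrix (Fin (2*l)) (Fin (2*l)) F → (V →ₗ[ℂ] V)) : Prop :=
  ∃ Γ : V →ₗ[ℂ] ℂ, WhFunctional F ψ l ρ Γ

/-- The `ψ`-Whittaker model `{g ↦ Γ(ρ(g)v)}`. -/
def WhModel (ρ : Matrix (Fin (2*l)) (Fin (2*l)) F → (V →ₗ[ℂ] V)) :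
    Set (Matrix (Fin (2*l)) (Fin (2*l)) F → ℂ) :=
  {W | ∃ Γ : V →ₗ[ℂ] ℂ, WhFunctional F ψ l ρ Γ ∧ ∃ v : V, W = fun g => Γ (ρ g v)}

/-- `B` is the normalized Bessel function of the (generic) action `ρ`:
`B(g) = Γ(ρ(g)v₀)/Γ(v₀)` where `v₀ = |U|⁻¹ ∑_{u ∈ U} ψ(u)⁻¹ ρ(u) v` and `Γ(v₀) ≠ 0`. -/
def IsBesselOf (ρ : Matrix (Fin (2*l)) (Fin (2*l)) F → (V →ₗ[ℂ] V))
    (B : Matrix (Fin (2*l)) (Fin (2*l)) F → ℂ) : Prop :=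
  ∃ Γ : V →ₗ[ℂ] ℂ, WhFunctional F ψ l ρ Γ ∧
    ∃ v v₀ : V,
      (v₀ = ((USO F l).ncard : ℂ)⁻¹ •
          ∑ u : Matrix (Fin (2*l)) (Fin (2*l)) F,
            (if u ∈ USO F l then (soPsi F ψ l u)⁻¹ • ρ u v else 0)) ∧
      Γ v₀ ≠ 0 ∧ ∀ g, B g = Γ (ρ g v₀) / Γ v₀

end WhBessel

/-- The matrix `c = diag(I_{l-1}, [[0,1],[1,0]], I_{l-1})` realizing the outer automorphism. -/
def cmat (F : Type) [Field F] (l : ℕ) : Matrix (Fin (2*l)) (Fin (2*l)) F :=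
  Matrix.of fun i j =>
    if ((i : ℕ) = l-1 ∧ (j : ℕ) = l) ∨ ((i : ℕ) = l ∧ (j : ℕ) = l-1) then 1
    else if i = j ∧ (i : ℕ) ≠ l-1 ∧ (i : ℕ) ≠ l then 1 else 0

/-- `t̃ = diag(I_{l-1}, -1/2, -2, I_{l-1})`. -/
def ttilde (F : Type) [Field F] (l : ℕ) : Matrix (Fin (2*l)) (Fin (2*l)) F :=
  Matrix.of fun i j =>
    if i = j then (if (i : ℕ) = l-1 then -(2:F)⁻¹ else if (i : ℕ) = l then -2 else 1) else 0

/-- `t_n' = t̃` if `n` is odd and `I` if `n` is even. -/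
def tprime (F : Type) [Field F] (l n : ℕ) : Matrix (Fin (2*l)) (Fin (2*l)) F :=
  if n % 2 = 1 then ttilde F l else 1

/-- `a* = J_n ᵗa⁻¹ J_n`. -/
def astar {F : Type} [Field F] {n : ℕ} (a : Matrix (Fin n) (Fin n) F) :
    Matrix (Fin n) (Fin n) F :=
  matJ F n * a⁻¹.transpose * matJ F n

/-- `t_n(x) = diag(x, I_{2l-2n}, x*) ∈ SO_{2l}`. -/
def tmat (F : Type) [Field F] (l n : ℕ) (x : Matrix (Fin n) (Fin n) F) :
    Matrix (Fin (2*l)) (Fin (2*l)) F :=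
  Matrix.of fun i j =>
    if (i : ℕ) < n ∧ (j : ℕ) < n then ent x (i : ℕ) (j : ℕ)
    else if 2*l-n ≤ (i : ℕ) ∧ 2*l-n ≤ (j : ℕ) then
      ent (astar x) ((i : ℕ) - (2*l-n)) ((j : ℕ) - (2*l-n))
    else if i = j then 1 else 0

/-- 0-1 permutation matrices. -/
def IsPermMatrix {F : Type} [Field F] {m : ℕ} (w : Matrix (Fin m) (Fin m) F) : Prop :=
  (∀ i j, w i j = 0 ∨ w i j = 1) ∧ (∀ i, ∃! j, w i j = 1) ∧ (∀ j, ∃! i, w i j = 1)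

/-- The Weyl group of `SO_{2l}` realized as permutation matrices in `SO_{2l}`. -/
def WeylSO (F : Type) [Field F] (l : ℕ) : Set (Matrix (Fin (2*l)) (Fin (2*l)) F) :=
  {w | w ∈ SOset F (2*l) ∧ IsPermMatrix w}

/-- The simple roots of `SO_{2l}` as formal exponent vectors (1-based `i`, `1 ≤ i ≤ l`):
`α_i = ε_{i-1} - ε_i` for `i < l` and `α_l = ε_{l-2} + ε_{l-1}` (0-based `ε`'s). -/
def simpleRoot (l i : ℕ) : ℕ → ℤ :=
  if i < l then fun k => (if k = i-1 then 1 else 0) - (if k = i then 1 else 0)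
  else fun k => (if k = l-2 then 1 else 0) + (if k = l-1 then 1 else 0)

/-- Positive roots of type `D_l` as exponent vectors: `ε_i - ε_j`, `ε_i + ε_j` for `i < j < l`. -/
def IsPosRoot (l : ℕ) (e : ℕ → ℤ) : Prop :=
  ∃ i j : ℕ, i < j ∧ j < l ∧
    ((e = fun k => (if k = i then 1 else 0) - (if k = j then 1 else 0)) ∨
     (e = fun k => (if k = i then 1 else 0) + (if k = j then 1 else 0)))

def IsNegRoot (l : ℕ) (e : ℕ → ℤ) : Prop := IsPosRoot l (fun k => -(e k))

def IsSimpleRoot (l : ℕ) (e : ℕ → ℤ) : Prop := ∃ i, 1 ≤ i ∧ i ≤ l ∧ e = simpleRoot l i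

/-- The action of a Weyl element `w` on the exponent vector of a root,
`(wα)(t) = α(w⁻¹ t w)`. -/
def weylAct {F : Type} [Field F] (l : ℕ) (w : Matrix (Fin (2*l)) (Fin (2*l)) F)
    (e : ℕ → ℤ) : ℕ → ℤ :=
  fun k => ∑ p ∈ Finset.range l,
    e p * ((if ent w k p = 1 then 1 else 0) - (if ent w (2*l-1-k) p = 1 then 1 else 0))

/-- `w` supports Bessel functions: `wα` is negative or simple for every simple root `α`. -/
def SupportsBessel {F : Type} [Field F] (l : ℕ)
    (w : Matrix (Fin (2*l)) (Fin (2*l)) F) : Prop :=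
  ∀ i, 1 ≤ i → i ≤ l →
    IsNegRoot l (weylAct l w (simpleRoot l i)) ∨ IsSimpleRoot l (weylAct l w (simpleRoot l i))

/-- The Bessel support `B(SO_{2l})`. -/
def BesselSupport (F : Type) [Field F] (l : ℕ) : Set (Matrix (Fin (2*l)) (Fin (2*l)) F) :=
  {w | w ∈ WeylSO F l ∧ SupportsBessel l w}

/-- `w̃_n` (for `1 ≤ n ≤ l-1`): block matrix with blocks `(n, l-n-1, 2, l-n-1, n)`,
`I_n` in corners, `I_{l-n-1}` in positions (2,2), (4,4) and central `X = J_2` (n odd),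
`I_2` (n even). -/
def wtilden (F : Type) [Field F] (l n : ℕ) : Matrix (Fin (2*l)) (Fin (2*l)) F :=
  Matrix.of fun i j =>
    if (i : ℕ) < n then (if (j : ℕ) = (i : ℕ) + (2*l-n) then 1 else 0)
    else if (i : ℕ) < l-1 then (if j = i then 1 else 0)
    else if (i : ℕ) < l+1 then
      (if n % 2 = 1 then (if (i : ℕ) + (j : ℕ) = 2*l-1 then 1 else 0)
       else (if j = i then 1 else 0))
    else if (i : ℕ) < 2*l-n then (if j = i then 1 else 0)
    else (if (j : ℕ) + (2*l-n) = (i : ℕ) then 1 else 0)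

/-- `w̃'_l`. -/
def wtildelp (F : Type) [Field F] (l : ℕ) : Matrix (Fin (2*l)) (Fin (2*l)) F :=
  if l % 2 = 0 then
    Matrix.of fun i j => if (j : ℕ) = (i : ℕ) + l ∨ (i : ℕ) = (j : ℕ) + l then 1 else 0
  else
    Matrix.of fun i j =>
      if (i : ℕ) < l-1 then (if (j : ℕ) = (i : ℕ) + l then 1 else 0)
      else if (i : ℕ) = l-1 then (if (j : ℕ) = 0 then 1 else 0)
      else if (i : ℕ) = l then (if (j : ℕ) = 2*l-1 then 1 else 0)
      else (if (j : ℕ) + l = (i : ℕ) then 1 else 0)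

/-- `w̃_l = w̃'_l` if `l` even, `c w̃'_l c` if `l` odd. -/
def wtildel (F : Type) [Field F] (l : ℕ) : Matrix (Fin (2*l)) (Fin (2*l)) F :=
  if l % 2 = 0 then wtildelp F l else cmat F l * wtildelp F l * cmat F l

/-- `B_n(SO_{2l})` for `1 ≤ n ≤ l-2`. -/
def Bset (F : Type) [Field F] (l n : ℕ) : Set (Matrix (Fin (2*l)) (Fin (2*l)) F) :=
  {w | w ∈ BesselSupport F l ∧
    ∃ w' : Matrix (Fin n) (Fin n) F, IsPermMatrix w' ∧ w = tmat F l n w' * wtilden F l n}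

/-- `B_{l-1}(SO_{2l})`. -/
def Bsetlm1 (F : Type) [Field F] (l : ℕ) : Set (Matrix (Fin (2*l)) (Fin (2*l)) F) :=
  {w | w ∈ BesselSupport F l ∧
    (∃ w' : Matrix (Fin l) (Fin l) F, IsPermMatrix w' ∧ w = tmat F l l w' * wtildel F l) ∧
    cmat F l * w * cmat F l = w}

/-- `B_l(SO_{2l})`. -/
def Bsetl (F : Type) [Field F] (l : ℕ) : Set (Matrix (Fin (2*l)) (Fin (2*l)) F) :=
  {w | w ∈ BesselSupport F l ∧
    (∃ w' : Matrix (Fin l) (Fin l) F, IsPermMatrix w' ∧ w = tmat F l l w' * wtildel F l) ∧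
    cmat F l * w * cmat F l ≠ w}

/-- `B_l^c(SO_{2l}) = {cwc : w ∈ B_l(SO_{2l})}`. -/
def Bsetlc (F : Type) [Field F] (l : ℕ) : Set (Matrix (Fin (2*l)) (Fin (2*l)) F) :=
  {x | ∃ w ∈ Bsetl F l, x = cmat F l * w * cmat F l}

/-- The family `B_0, B_1, …, B_l, B_l^c` indexed by `0, …, l+1`. -/
def Bfam (F : Type) [Field F] (l : ℕ) : ℕ → Set (Matrix (Fin (2*l)) (Fin (2*l)) F) :=
  fun n =>
    if n = 0 then {1}
    else if n ≤ l-2 then Bset F l n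
    else if n = l-1 then Bsetlm1 F l
    else if n = l then Bsetl F l
    else Bsetlc F l

/-- The matrix `[[0, w''],[1, 0]]` built from `w'' ∈ GL_{l-1}`. -/
def cornerForm (F : Type) [Field F] (l : ℕ) (w'' : Matrix (Fin (l-1)) (Fin (l-1)) F) :
    Matrix (Fin l) (Fin l) F :=
  Matrix.of fun i j =>
    if (i : ℕ) = l-1 then (if (j : ℕ) = 0 then 1 else 0)
    else if (j : ℕ) = 0 then 0
    else ent w'' (i : ℕ) ((j : ℕ) - 1)

/-- `l_n(a) = diag(a, 1, a*) ∈ SO_{2n+1}`. -/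
def lmat (F : Type) [Field F] (n : ℕ) (a : Matrix (Fin n) (Fin n) F) :
    Matrix (Fin (2*n+1)) (Fin (2*n+1)) F :=
  Matrix.of fun i j =>
    if (i : ℕ) < n ∧ (j : ℕ) < n then ent a (i : ℕ) (j : ℕ)
    else if (i : ℕ) = n ∧ (j : ℕ) = n then 1
    else if n < (i : ℕ) ∧ n < (j : ℕ) then ent (astar a) ((i : ℕ) - (n+1)) ((j : ℕ) - (n+1))
    else 0

/-- The unipotent radical `V_n` of the Siegel parabolic `Q_n = L_n V_n ⊂ SO_{2n+1}`. -/
def Vset (F : Type) [Field F] (n : ℕ) : Set (Matrix (Fin (2*n+1)) (Fin (2*n+1)) F) :=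
  {u | u ∈ SOset F (2*n+1) ∧
    ∀ i j : Fin (2*n+1), ((j : ℕ) < n ∨ n ≤ (i : ℕ)) → u i j = if i = j then 1 else 0}

/-- `w_n = [[0,0,I_n],[0,(-1)^n,0],[I_n,0,0]] ∈ SO_{2n+1}`. -/
def wmat (F : Type) [Field F] (n : ℕ) : Matrix (Fin (2*n+1)) (Fin (2*n+1)) F :=
  Matrix.of fun i j =>
    if (i : ℕ) < n then (if (j : ℕ) = (i : ℕ) + n + 1 then 1 else 0)
    else if (i : ℕ) = n then (if (j : ℕ) = n then (-1)^n else 0)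
    else (if (j : ℕ) + n + 1 = (i : ℕ) then 1 else 0)

/-- `d_n = diag(-1, 1, …, (-1)^n)`. -/
def dmat (F : Type) [Field F] (n : ℕ) : Matrix (Fin n) (Fin n) F :=
  Matrix.of fun i j => if i = j then (-1)^((i : ℕ)+1) else 0

/-- Sections of the induced representation `I(τ) = Ind_{Q_n}^{SO_{2n+1}} τ`. -/
def IndSec (F : Type) [Field F] (n : ℕ) (τ : FRep F n (GLset F n)) :
    Set (Matrix (Fin (2*n+1)) (Fin (2*n+1)) F → τ.V) :=
  {ξ | ∀ a : Matrix (Fin n) (Fin n) F, IsUnit a.det → ∀ u ∈ Vset F n,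
      ∀ g ∈ SOset F (2*n+1), ξ (lmat F n a * u * g) = τ.ρ a (ξ g)}

/-- The space `I(τ, ψ⁻¹)` spanned by the functions `f_ξ(g, a) = Λ_τ(τ(a)ξ(g))`. -/
def Ispace (F : Type) [Field F] (n : ℕ) (τ : FRep F n (GLset F n)) (Λ : τ.V →ₗ[ℂ] ℂ) :
    Submodule ℂ (Matrix (Fin (2*n+1)) (Fin (2*n+1)) F → Matrix (Fin n) (Fin n) F → ℂ) :=
  Submodule.span ℂ {f | ∃ ξ ∈ IndSec F n τ, f = fun g a => Λ (τ.ρ a (ξ g))}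

/-- The intertwining operator `M(τ,ψ⁻¹)f(h,a) = ∑_{u ∈ V_n} f(w_n u h, d_n a*)`. -/
def Mop (F : Type) [Field F] [Fintype F] (n : ℕ)
    (f : Matrix (Fin (2*n+1)) (Fin (2*n+1)) F → Matrix (Fin n) (Fin n) F → ℂ) :
    Matrix (Fin (2*n+1)) (Fin (2*n+1)) F → Matrix (Fin n) (Fin n) F → ℂ :=
  fun h a => ∑ u : Matrix (Fin (2*n+1)) (Fin (2*n+1)) F,
    if u ∈ Vset F n then f (wmat F n * u * h) (dmat F n * astar a) else 0

/-- Insert a new basis vector (fixed by the matrix) at position `k`. -/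
def insMid (F : Type) [Field F] (m M k : ℕ) (A : Matrix (Fin m) (Fin m) F) :
    Matrix (Fin M) (Fin M) F :=
  Matrix.of fun i j =>
    if (i : ℕ) = k ∧ (j : ℕ) = k then 1
    else if (i : ℕ) = k ∨ (j : ℕ) = k then 0
    else ent A (if (i : ℕ) < k then (i : ℕ) else (i : ℕ) - 1)
               (if (j : ℕ) < k then (j : ℕ) else (j : ℕ) - 1)

/-- `diag(I_k, B, I_{M-k-m})`. -/
def padDiag (F : Type) [Field F] (M k m : ℕ) (B : Matrix (Fin m) (Fin m) F) :
    Matrix (Fin M) (Fin M) F :=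
  Matrix.of fun i j =>
    if k ≤ (i : ℕ) ∧ (i : ℕ) < k + m ∧ k ≤ (j : ℕ) ∧ (j : ℕ) < k + m then
      ent B ((i : ℕ) - k) ((j : ℕ) - k)
    else if i = j then 1 else 0

/-- `M̃ = [[1/4,1/2,-1/2],[1/2,0,1],[-1/2,1,1]]`. -/
def Mtilde3 (F : Type) [Field F] : Matrix (Fin 3) (Fin 3) F :=
  !![(4:F)⁻¹, (2:F)⁻¹, -(2:F)⁻¹; (2:F)⁻¹, 0, 1; -(2:F)⁻¹, 1, 1]

/-- `[[2,-1],[1,1/2]]`. -/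
def M2small (F : Type) [Field F] : Matrix (Fin 2) (Fin 2) F :=
  !![(2:F), -1; 1, (2:F)⁻¹]

/-- `M = diag(I_{l-1}, M̃, I_{l-1})` of size `2l+1`. -/
def embM (F : Type) [Field F] (l : ℕ) : Matrix (Fin (2*l+1)) (Fin (2*l+1)) F :=
  padDiag F (2*l+1) (l-1) 3 (Mtilde3 F)

/-- The embedding `SO_{2l} ↪ SO_{2l+1}`, `g ↦ M⁻¹ (g with middle 1 inserted) M`. -/
def embSO2l (F : Type) [Field F] (l : ℕ) (g : Matrix (Fin (2*l)) (Fin (2*l)) F) :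
    Matrix (Fin (2*l+1)) (Fin (2*l+1)) F :=
  (embM F l)⁻¹ * insMid F (2*l) (2*l+1) l g * embM F l

/-- The embedding `SO_{2n+1} ↪ SO_{2l}` (`n < l`) through the Levi `GL_{l-n-1} × SO_{2n+2}`. -/
def embSOodd (F : Type) [Field F] (l n : ℕ) (g : Matrix (Fin (2*n+1)) (Fin (2*n+1)) F) :
    Matrix (Fin (2*l)) (Fin (2*l)) F :=
  padDiag F (2*l) (l-n-1) (2*n+2)
    ((padDiag F (2*n+2) n 2 (M2small F))⁻¹ * insMid F (2*n+1) (2*n+2) n g *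
      padDiag F (2*n+2) n 2 (M2small F))

/-- `w_{l,l} = diag((1/2)I_l, 1, 2I_l)`. -/
def wll (F : Type) [Field F] (l : ℕ) : Matrix (Fin (2*l+1)) (Fin (2*l+1)) F :=
  Matrix.of fun i j =>
    if i = j then (if (i : ℕ) < l then (2:F)⁻¹ else if (i : ℕ) = l then 1 else 2) else 0

/-- The block permutation matrix `w^{l,n}`. -/
def wln (F : Type) [Field F] (l n : ℕ) : Matrix (Fin (2*l)) (Fin (2*l)) F :=
  Matrix.of fun i j =>
    if (i : ℕ) < n then (if (j : ℕ) = (i : ℕ) + (l-n-1) then 1 else 0)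
    else if (i : ℕ) < l-1 then (if (j : ℕ) + n = (i : ℕ) then 1 else 0)
    else if (i : ℕ) < l+1 then (if j = i then 1 else 0)
    else if (i : ℕ) < 2*l-n then (if (j : ℕ) = (i : ℕ) + n then 1 else 0)
    else (if (j : ℕ) + (l-n-1) = (i : ℕ) then 1 else 0)

/-- The set `R^{l,n}` of lower unipotent matrices in `SO_{2l}` with free `(l-n-1) × n`
block `x` below the leading identity block and the dual block `x'`. -/
def Rset (F : Type) [Field F] (l n : ℕ) : Set (Matrix (Fin (2*l)) (Fin (2*l)) F) :=
  {r | r ∈ SOset F (2*l) ∧ (∀ i : Fin (2*l), r i i = 1) ∧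
    ∀ i j : Fin (2*l), i ≠ j → r i j ≠ 0 →
      ((n ≤ (i : ℕ) ∧ (i : ℕ) < l-1 ∧ (j : ℕ) < n) ∨
       (2*l-n ≤ (i : ℕ) ∧ l+1 ≤ (j : ℕ) ∧ (j : ℕ) < 2*l-n))}

/-- The zeta sum `Ψ(W, f)` in the case `n = l`. -/
def ZetaTop (F : Type) [Field F] [Fintype F] (l : ℕ)
    (W : Matrix (Fin (2*l)) (Fin (2*l)) F → ℂ)
    (f : Matrix (Fin (2*l+1)) (Fin (2*l+1)) F → Matrix (Fin l) (Fin l) F → ℂ) : ℂ :=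
  ((USO F l).ncard : ℂ)⁻¹ *
    ∑ g : Matrix (Fin (2*l)) (Fin (2*l)) F,
      if g ∈ SOset F (2*l) then W g * f (wll F l * embSO2l F l g) 1 else 0

/-- The zeta sum `Ψ(W, f)` in the case `n < l`. -/
def ZetaLow (F : Type) [Field F] [Fintype F] (l n : ℕ)
    (W : Matrix (Fin (2*l)) (Fin (2*l)) F → ℂ)
    (f : Matrix (Fin (2*n+1)) (Fin (2*n+1)) F → Matrix (Fin n) (Fin n) F → ℂ) : ℂ :=
  ((upperUnip F (2*n+1) ∩ SOset F (2*n+1)).ncard : ℂ)⁻¹ *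
    ∑ g : Matrix (Fin (2*n+1)) (Fin (2*n+1)) F,
      if g ∈ SOset F (2*n+1) then
        (∑ r : Matrix (Fin (2*l)) (Fin (2*l)) F,
           if r ∈ Rset F l n then
             W (r * (wln F l n * embSOodd F l n g * (wln F l n)⁻¹))
           else 0) * f g 1
      else 0

/-- The zeta sum `Ψ(W, f)` for `1 ≤ n ≤ l`. -/
def GenZeta (F : Type) [Field F] [Fintype F] (l n : ℕ)
    (W : Matrix (Fin (2*l)) (Fin (2*l)) F → ℂ)
    (f : Matrix (Fin (2*n+1)) (Fin (2*n+1)) F → Matrix (Fin n) (Fin n) F → ℂ) : ℂ :=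
  if h : n = l then
    ZetaTop F l W (fun g a => f (cast (by rw [h]) g) (cast (by rw [h]) a))
  else ZetaLow F l n W f

/-- `τ` is a `ψ`-generic representation of `GL_n`. -/
def GLGeneric (F : Type) [Field F] (ψ : AddChar F ℂ) (n : ℕ)
    (τ : FRep F n (GLset F n)) : Prop :=
  ∃ Λ : τ.V →ₗ[ℂ] ℂ, Λ ≠ 0 ∧ ∀ u ∈ upperUnip F n, ∀ v : τ.V,
    Λ (τ.ρ u v) = glPsi F ψ n u * Λ v

/-- A nonzero `ψ⁻¹`-Whittaker functional on `τ`. -/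
def IsGLWhittakerInv (F : Type) [Field F] (ψ : AddChar F ℂ) (n : ℕ)
    (τ : FRep F n (GLset F n)) (Λ : τ.V →ₗ[ℂ] ℂ) : Prop :=
  Λ ≠ 0 ∧ ∀ u ∈ upperUnip F n, ∀ v : τ.V, Λ (τ.ρ u v) = glPsiInv F ψ n u * Λ v

/-- `γ` is a gamma factor `γ(π × τ, ψ)`: `γ Ψ(W,f) = Ψ(W, M(τ,ψ⁻¹)f)` for all `W` in the
`ψ`-Whittaker model of `π` (given in terms of its action `ρ`) and all `f ∈ I(τ,ψ⁻¹)`. -/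
def IsGammaFactorOf (F : Type) [Field F] [Fintype F] (ψ : AddChar F ℂ) (l n : ℕ)
    {V : Type} [AddCommGroup V] [Module ℂ V]
    (ρ : Matrix (Fin (2*l)) (Fin (2*l)) F → (V →ₗ[ℂ] V))
    (τ : FRep F n (GLset F n)) (γ : ℂ) : Prop :=
  ∀ Λ : τ.V →ₗ[ℂ] ℂ, IsGLWhittakerInv F ψ n τ Λ →
    ∀ W ∈ WhModel F ψ l ρ, ∀ f ∈ Ispace F n τ Λ,
      γ * GenZeta F l n W f = GenZeta F l n W (Mop F n f)

/-- `i` and `j` lie in the same block determined by the cuts `C`. -/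
def sameBlock (C : Finset ℕ) (i j : ℕ) : Prop := ∀ c ∈ C, (i < c ↔ j < c)

/-- The Levi subgroup of the parabolic subgroup of `SO_m` obtained by conjugating the
standard parabolic with cuts `C` by `h`. -/
def LeviSet (F : Type) [Field F] (m : ℕ) (C : Finset ℕ) (h : Matrix (Fin m) (Fin m) F) :
    Set (Matrix (Fin m) (Fin m) F) :=
  {x | ∃ d, d ∈ SOset F m ∧ (∀ i j : Fin m, ¬ sameBlock C (i : ℕ) (j : ℕ) → d i j = 0) ∧
    x = h * d * h⁻¹}

/-- The unipotent radical of the same parabolic subgroup. -/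
def URadSet (F : Type) [Field F] (m : ℕ) (C : Finset ℕ) (h : Matrix (Fin m) (Fin m) F) :
    Set (Matrix (Fin m) (Fin m) F) :=
  {x | ∃ u ∈ blockUnipRad F m C, x = h * u * h⁻¹}

/-- The space of the induced representation `Ind_Q^{SO_m} σ` (with `σ` inflated trivially
across the unipotent radical), on which `SO_m` acts by right translation. -/
def IndSet (F : Type) [Field F] (m : ℕ) (C : Finset ℕ) (h : Matrix (Fin m) (Fin m) F)
    (σ : FRep F m (LeviSet F m C h)) : Set (Matrix (Fin m) (Fin m) F → σ.V) :=
  {f | ∀ a ∈ LeviSet F m C h, ∀ u ∈ URadSet F m C h, ∀ g ∈ SOset F m,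
      f (a * u * g) = σ.ρ a (f g)}

/-- The unipotent subgroup `N^{l-n} ⊂ SO_{2l}`. -/
def Nset (F : Type) [Field F] (l n : ℕ) : Set (Matrix (Fin (2*l)) (Fin (2*l)) F) :=
  {v | v ∈ SOset F (2*l) ∧ v ∈ upperUnip F (2*l) ∧
    ∀ i j : Fin (2*l), l-n-1 ≤ (i : ℕ) → (i : ℕ) < l+n+1 → l-n-1 ≤ (j : ℕ) →
      (j : ℕ) < l+n+1 → v i j = if i = j then 1 else 0}

/-- The character `ψ'` of `N^{l-n}`. -/
def psiPrime (F : Type) [Field F] (ψ : AddChar F ℂ) (l n : ℕ)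
    (v : Matrix (Fin (2*l)) (Fin (2*l)) F) : ℂ :=
  ψ ((∑ i ∈ Finset.range (l-n-2), ent v i (i+1))
      + (4 : F)⁻¹ * ent v (l-n-2) (l-1) - (2 : F)⁻¹ * ent v (l-n-2) l)

/-- Isomorphism of two representations of the same matrix set. -/
def FRepIso {F : Type} [Field F] {m : ℕ} {S : Set (Matrix (Fin m) (Fin m) F)}
    (π π' : FRep F m S) : Prop :=
  ∃ T : π.V ≃ₗ[ℂ] π'.V, ∀ g ∈ S, ∀ v : π.V, T (π.ρ g v) = π'.ρ g (T v)

/-- `π ≅ c·π'`, where `(c·π')(g) = π'(cgc)`. -/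
def FRepIsoConj {F : Type} [Field F] {l : ℕ}
    (π π' : FRep F (2*l) (SOset F (2*l))) : Prop :=
  ∃ T : π.V ≃ₗ[ℂ] π'.V, ∀ g ∈ SOset F (2*l), ∀ v : π.V,
    T (π.ρ g v) = π'.ρ (cmat F l * g * cmat F l) (T v)

/-- `π` and `π'` have the same central character (the center of `SO_{2l}` consisting of
the scalar matrices it contains). -/
def SameCentralChar {F : Type} [Field F] {m : ℕ}
    (π π' : FRep F m (SOset F m)) : Prop :=
  ∀ d : F, (d • (1 : Matrix (Fin m) (Fin m) F)) ∈ SOset F m →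
    ∃ s : ℂ, π.ρ (d • 1) = s • LinearMap.id ∧ π'.ρ (d • 1) = s • LinearMap.id

/-- The section `ξ_v ∈ I(τ)` supported on `Q_n` with `ξ_v(l_n(a)u) = τ(a)v`. -/
def xiV (F : Type) [Field F] (n : ℕ) (τ : FRep F n (GLset F n)) (v : τ.V) :
    Matrix (Fin (2*n+1)) (Fin (2*n+1)) F → τ.V :=
  fun g =>
    if h : ∃ a : Matrix (Fin n) (Fin n) F, IsUnit a.det ∧ ∃ u ∈ Vset F n, g = lmat F n a * u
    then τ.ρ h.choose v else 0

/-- The subset `Q_l w_l V_l ⊂ SO_{2l+1}`. -/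
def QwlVl (F : Type) [Field F] (l : ℕ) : Set (Matrix (Fin (2*l+1)) (Fin (2*l+1)) F) :=
  {x | ∃ a : Matrix (Fin l) (Fin l) F, IsUnit a.det ∧ ∃ u ∈ Vset F l, ∃ v ∈ Vset F l,
      x = lmat F l a * u * wmat F l * v}

/-!
Write `t = diag(d)`. Since `t` normalizes `U = U_{SO_{2l}}`, expanding `v₀` gives
`Γ(π(t)v₀) = |U|⁻¹ (∑_{u ∈ U} ψ(u)⁻¹ ψ(t u t⁻¹)) Γ(π(t)v)`, so `B(t) ≠ 0` forces the character
`u ↦ ψ(u)⁻¹ ψ(t u t⁻¹)` of `U` to be trivial (a nontrivial character sums to zero over `U`).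
On the root element `x_α(c)` of a simple root `α` we have `t x_α(c) t⁻¹ = x_α(α(t) c)` and
`ψ(x_α(c)) = ψ(k_α c)` with `k_α ∈ {1, 1/4, -1/2}` nonzero since `q` is odd, so `α(t) = 1` for
every simple root, and a torus element killed by all simple roots of `D_l` is `±I`.
-/

open Matrix Finset

theorem sum_ite_mem_eq_zero_of_map_mul {M R : Type*} [Monoid M] [Fintype M] [CommRing R]
    [IsDomain R] {U : Set M} (hU : ∀ u ∈ U, ∀ v ∈ U, u * v ∈ U) {χ : M → R} (g : Mˣ)
    (hg : (g : M) ∈ U) (hg' : ((g⁻¹ : Mˣ) : M) ∈ U) (hχ : ∀ u ∈ U, χ (g * u) = χ g * χ u)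
    (hχg : χ g ≠ 1) : ∑ u, (if u ∈ U then χ u else 0) = 0 := by
  set S := ∑ u, (if u ∈ U then χ u else 0)
  have hS : S = χ g * S := calc
    S = ∑ u, if (g : M) * u ∈ U then χ (g * u) else 0 :=
        (Equiv.sum_comp (Units.mulLeft g) fun u => if u ∈ U then χ u else 0).symm
    _ = ∑ u, χ g * if u ∈ U then χ u else 0 := sum_congr rfl fun u _ => by
        by_cases hu : u ∈ U
        · rw [if_pos (hU _ hg _ hu), if_pos hu, hχ u hu]
        · rw [if_neg hu, if_neg fun h => hu (by simpa using hU _ hg' _ h), mul_zero]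
    _ = χ g * S := (mul_sum _ _ _).symm
  have : (χ g - 1) * S = 0 := by linear_combination -hS
  exact (mul_eq_zero.mp this).resolve_left (sub_ne_zero.mpr hχg)

section Orthogonal

variable {F : Type} [Field F] {m : ℕ}

theorem matJ_apply (p q : Fin m) : matJ F m p q = if q = p.rev then 1 else 0 :=
  if_congr (by rw [Fin.ext_iff, Fin.val_rev]; omega) rfl rfl

theorem matJ_mul_apply (g : Matrix (Fin m) (Fin m) F) (p q : Fin m) :
    (matJ F m * g) p q = g p.rev q := by
  simp [mul_apply, matJ_apply]

theorem mul_mem_SOset {g h : Matrix (Fin m) (Fin m) F} (hg : g ∈ SOset F m)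
    (hh : h ∈ SOset F m) : g * h ∈ SOset F m := by
  refine ⟨by rw [det_mul, hg.1, hh.1, mul_one], ?_⟩
  calc (g * h)ᵀ * matJ F m * (g * h) = hᵀ * (gᵀ * matJ F m * g) * h := by
        rw [transpose_mul]; noncomm_ring
    _ = matJ F m := by rw [hg.2, hh.2]

theorem isUnit_det_of_mem_SOset {g : Matrix (Fin m) (Fin m) F} (hg : g ∈ SOset F m) :
    IsUnit g.det := by
  rw [hg.1]
  exact isUnit_one

theorem inv_mem_SOset {g : Matrix (Fin m) (Fin m) F} (hg : g ∈ SOset F m) :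
    g⁻¹ ∈ SOset F m := by
  refine ⟨by rw [det_nonsing_inv, hg.1, Ring.inverse_one], ?_⟩
  calc g⁻¹ᵀ * matJ F m * g⁻¹ = g⁻¹ᵀ * (gᵀ * matJ F m * g) * g⁻¹ := by rw [hg.2]
    _ = (g * g⁻¹)ᵀ * matJ F m * (g * g⁻¹) := by rw [transpose_mul]; noncomm_ring
    _ = matJ F m := by
        rw [mul_nonsing_inv _ (isUnit_det_of_mem_SOset hg), transpose_one, one_mul, mul_one]

theorem sum_mul_rev_eq_matJ {g : Matrix (Fin m) (Fin m) F} (hg : g ∈ SOset F m) (i j : Fin m) :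
    ∑ q, g q i * g q.rev j = matJ F m i j := by
  rw [← hg.2, mul_assoc, mul_apply]
  simp only [transpose_apply, matJ_mul_apply]

end Orthogonal

section UpperUnipotent

variable {F : Type} [Field F] {m : ℕ}

theorem ent_of_lt (A : Matrix (Fin m) (Fin m) F) {i j : ℕ} (hi : i < m) (hj : j < m) :
    ent A i j = A ⟨i, hi⟩ ⟨j, hj⟩ :=
  dif_pos ⟨hi, hj⟩

theorem ent_mul (A B : Matrix (Fin m) (Fin m) F) (i j : ℕ) :
    ent (A * B) i j = ∑ k ∈ range m, ent A i k * ent B k j := by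
  by_cases h : i < m ∧ j < m
  · rw [ent_of_lt _ h.1 h.2, mul_apply,
      ← Fin.sum_univ_eq_sum_range (fun k => ent A i k * ent B k j) m]
    simp only [ent_of_lt _ h.1 (Fin.isLt _), ent_of_lt _ (Fin.isLt _) h.2]
  · rw [ent, dif_neg h]
    refine Eq.symm (sum_eq_zero fun k _ => ?_)
    rcases not_and_or.mp h with hi | hj
    · rw [show ent A i k = 0 from dif_neg (fun h => hi h.1), zero_mul]
    · rw [show ent B k j = 0 from dif_neg (fun h => hj h.2), mul_zero]

theorem det_eq_one_of_mem_upperUnip {u : Matrix (Fin m) (Fin m) F} (hu : u ∈ upperUnip F m) :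
    u.det = 1 := by
  rw [det_of_isUpperTriangular (fun i j h => hu.1 i j h)]
  simp [hu.2]

theorem mul_mem_upperUnip {u v : Matrix (Fin m) (Fin m) F} (hu : u ∈ upperUnip F m)
    (hv : v ∈ upperUnip F m) : u * v ∈ upperUnip F m := by
  have hbt := BlockTriangular.mul (b := id) (fun i j h => hu.1 i j h) (fun i j h => hv.1 i j h)
  refine ⟨fun i j h => hbt h, fun i => ?_⟩
  rw [mul_apply, sum_eq_single i (fun k _ hk => ?_) (by simp), hu.2, hv.2, one_mul]
  rcases lt_or_gt_of_ne hk with h | h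
  · rw [hu.1 i k h, zero_mul]
  · rw [hv.1 k i h, mul_zero]

theorem ent_eq_zero_of_mem_upperUnip {u : Matrix (Fin m) (Fin m) F} (hu : u ∈ upperUnip F m)
    {i j : ℕ} (hji : j < i) : ent u i j = 0 := by
  unfold ent
  split_ifs with h
  · exact hu.1 _ _ hji
  · rfl

theorem ent_self_of_mem_upperUnip {u : Matrix (Fin m) (Fin m) F} (hu : u ∈ upperUnip F m)
    {i : ℕ} (hi : i < m) : ent u i i = 1 := by
  rw [ent_of_lt _ hi hi]
  exact hu.2 _

theorem ent_mul_of_mem_upperUnip {u v : Matrix (Fin m) (Fin m) F} (hu : u ∈ upperUnip F m)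
    (hv : v ∈ upperUnip F m) (i : ℕ) {j : ℕ} (hj : j < m) :
    ent (u * v) i j = ∑ k ∈ Icc i j, ent u i k * ent v k j := by
  rw [ent_mul]
  refine (sum_subset (fun k hk => ?_) fun k _ hk => ?_).symm
  · simp only [mem_Icc, mem_range] at hk ⊢
    omega
  · simp only [mem_Icc, not_and_or, not_le] at hk
    rcases hk with h | h
    · rw [ent_eq_zero_of_mem_upperUnip hu h, zero_mul]
    · rw [ent_eq_zero_of_mem_upperUnip hv h, mul_zero]

end UpperUnipotent

section GenericCharacter

variable {F : Type} [Field F] {l : ℕ}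

theorem mul_mem_USO {u v : Matrix (Fin (2*l)) (Fin (2*l)) F} (hu : u ∈ USO F l)
    (hv : v ∈ USO F l) : u * v ∈ USO F l :=
  ⟨mul_mem_upperUnip hu.1 hv.1, mul_mem_SOset hu.2 hv.2⟩

/-- Orthogonality of the `l`-th column with itself reads `2 u_{l-1,l} u_{l,l} = 0`. -/
theorem ent_middle_eq_zero_of_mem_USO (h2 : (2 : F) ≠ 0) (hl : 1 ≤ l)
    {u : Matrix (Fin (2*l)) (Fin (2*l)) F} (hu : u ∈ USO F l) : ent u (l-1) l = 0 := by
  set i₀ : Fin (2*l) := ⟨l-1, by omega⟩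
  set j₀ : Fin (2*l) := ⟨l, by omega⟩
  have hrev : i₀.rev = j₀ := Fin.ext (by simp [i₀, j₀]; omega)
  have hrev' : j₀.rev = i₀ := by rw [← hrev, Fin.rev_rev]
  have hne : i₀ ≠ j₀ := by simp [i₀, j₀, Fin.ext_iff]; omega
  have key := sum_mul_rev_eq_matJ hu.2 j₀ j₀
  rw [sum_eq_add i₀ j₀ hne ?_ (by simp) (by simp), matJ_apply, hrev, hrev',
    if_neg hne.symm, hu.1.2] at key
  · rw [ent_of_lt _ (by omega) (by omega)]
    exact (mul_eq_zero.mp (by linear_combination key : (2 : F) * u i₀ j₀ = 0)).resolve_left h2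
  · rintro q - ⟨hq₁, hq₂⟩
    rcases lt_or_gt_of_ne hq₂ with h | h
    · have : (j₀ : ℕ) < q.rev := by
        have : (q : ℕ) ≠ l - 1 := fun h => hq₁ (Fin.ext h)
        simp only [Fin.lt_def, j₀, Fin.val_rev] at h ⊢
        omega
      rw [hu.1.1 q.rev j₀ this, mul_zero]
    · rw [hu.1.1 q j₀ h, zero_mul]

variable (ψ : AddChar F ℂ)

theorem soPsi_mul (h2 : (2 : F) ≠ 0) (hl : 2 ≤ l) {u v : Matrix (Fin (2*l)) (Fin (2*l)) F}
    (hu : u ∈ USO F l) (hv : v ∈ USO F l) :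
    soPsi F ψ l (u * v) = soPsi F ψ l u * soPsi F ψ l v := by
  have hmid := ent_middle_eq_zero_of_mem_USO h2 (by omega) hv
  obtain ⟨n, rfl⟩ : ∃ n, l = n + 2 := ⟨l - 2, by omega⟩
  rw [show n + 2 - 1 = n + 1 by omega] at hmid
  have hsucc : ∀ i, i + 1 < 2 * (n+2) →
      ent (u * v) i (i+1) = ent u i (i+1) + ent v i (i+1) := fun i hi => by
    rw [ent_mul_of_mem_upperUnip hu.1 hv.1 i hi, sum_Icc_succ_top (by omega), Icc_self,
      sum_singleton, ent_self_of_mem_upperUnip hu.1 (by omega),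
      ent_self_of_mem_upperUnip hv.1 hi]
    ring
  have hcorner : ent (u * v) n (n+2) = ent u n (n+2) + ent v n (n+2) := by
    rw [ent_mul_of_mem_upperUnip hu.1 hv.1 n (by omega), sum_Icc_succ_top (by omega),
      sum_Icc_succ_top (by omega), Icc_self, sum_singleton,
      ent_self_of_mem_upperUnip hu.1 (by omega), ent_self_of_mem_upperUnip hv.1 (by omega), hmid]
    ring
  simp only [soPsi, ← AddChar.map_add_eq_mul, Nat.add_sub_cancel, show n + 2 - 1 = n + 1 by omega]
  congr 1
  rw [sum_congr rfl fun i hi => hsucc i (by simp at hi; omega), sum_add_distrib,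
    hsucc n (by omega), hcorner]
  ring

end GenericCharacter

section RootElements

variable {F : Type} [Field F] {l : ℕ}

/-- The root element `x_α(c)` for `α = ε_a - ε_b`; an index `i ≥ l` stands for `-ε_{i.rev}`. -/
def rootElt (l : ℕ) (a b : Fin (2*l)) (c : F) : Matrix (Fin (2*l)) (Fin (2*l)) F :=
  of fun p q => (if p = q then 1 else 0) + (if p = a ∧ q = b then c else 0)
    - (if p = b.rev ∧ q = a.rev then c else 0)

theorem Fin.ne_rev (i : Fin (2*l)) : i ≠ i.rev := fun h => by
  have := congrArg Fin.val h
  rw [Fin.val_rev] at this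
  omega

theorem rootElt_apply_of_ne {a b p : Fin (2*l)} (c : F) (q : Fin (2*l)) (hpa : p ≠ a)
    (hpb : p ≠ b.rev) : rootElt l a b c p q = if p = q then 1 else 0 := by
  simp [rootElt, hpa, hpb]

theorem rootElt_mul_apply (a b : Fin (2*l)) (c : F) (u : Matrix (Fin (2*l)) (Fin (2*l)) F)
    (p q : Fin (2*l)) :
    (rootElt l a b c * u) p q
      = u p q + (if p = a then c * u b q else 0) - (if p = b.rev then c * u a.rev q else 0) := by
  by_cases hpa : p = a <;> by_cases hpb : p = b.rev <;>
    simp [rootElt, mul_apply, add_mul, sub_mul, ite_and, sum_add_distrib, sum_sub_distrib, *]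

theorem rootElt_transpose (a b : Fin (2*l)) (c : F) : (rootElt l a b c)ᵀ = rootElt l b a c := by
  ext p q
  simp only [transpose_apply, rootElt, of_apply, eq_comm (a := q), and_comm]

theorem rootElt_zero (a b : Fin (2*l)) : rootElt l a b (0 : F) = 1 := by
  ext p q
  simp [rootElt, one_apply]

theorem rootElt_mul_rootElt {a b : Fin (2*l)} (hab : a ≠ b) (c c' : F) :
    rootElt l a b c * rootElt l a b c' = rootElt l a b (c + c') := by
  ext p q
  rw [rootElt_mul_apply, rootElt_apply_of_ne c' q hab.symm (Fin.ne_rev b),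
    rootElt_apply_of_ne c' q (Fin.ne_rev a).symm (fun h => hab (Fin.rev_inj.mp h))]
  simp only [rootElt, of_apply]
  simp only [ne_eq, Fin.ext_iff, Fin.val_rev] at hab ⊢
  split_ifs <;> first | ring1 | omega

theorem rootElt_mem_USO {a b : Fin (2*l)} (hab : a < b) (hab' : a ≠ b.rev) (c : F) :
    rootElt l a b c ∈ USO F l := by
  have hsum : (a : ℕ) + b + 1 ≠ 2 * l := fun h => hab' (Fin.ext (by rw [Fin.val_rev]; omega))
  rw [Fin.lt_def] at hab
  have hu : rootElt l a b c ∈ upperUnip F (2*l) := by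
    refine ⟨fun p q hqp => ?_, fun p => ?_⟩ <;>
    · simp only [rootElt, of_apply, Fin.ext_iff, Fin.val_rev]
      split_ifs <;> first | ring1 | omega
  refine ⟨hu, det_eq_one_of_mem_upperUnip hu, ?_⟩
  ext i j
  rw [mul_assoc, rootElt_transpose, rootElt_mul_apply, matJ_mul_apply, matJ_mul_apply,
    matJ_mul_apply, Fin.rev_rev, rootElt_apply_of_ne c j (Fin.ne_rev a).symm
      (fun h => hab.ne (congrArg Fin.val (Fin.rev_inj.mp h))),
    rootElt_apply_of_ne c j (Fin.ne_of_gt hab) (Fin.ne_rev b)]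
  simp only [rootElt, of_apply, matJ_apply, Fin.ext_iff, Fin.val_rev]
  split_ifs <;> first | ring1 | omega

theorem ent_rootElt {a b : Fin (2*l)} (hb : (b : ℕ) ≤ l) (c : F) {i j : ℕ} (hi : i + 2 ≤ l)
    (hj : j ≤ l) (hij : i < j) : ent (rootElt l a b c) i j = if i = a ∧ j = b then c else 0 := by
  rw [ent_of_lt _ (by omega) (by omega)]
  simp only [rootElt, of_apply, Fin.ext_iff, Fin.val_rev]
  split_ifs <;> first | ring1 | omega

variable (ψ : AddChar F ℂ)

theorem soPsi_rootElt (hl : 2 ≤ l) {a b : Fin (2*l)} (hb : (b : ℕ) ≤ l) (c : F) :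
    soPsi F ψ l (rootElt l a b c)
      = ψ ((∑ j ∈ range (l-2), if j = a ∧ j + 1 = b then c else 0)
          + 4⁻¹ * (if l - 2 = a ∧ l - 1 = b then c else 0)
          - 2⁻¹ * (if l - 2 = a ∧ l = b then c else 0)) := by
  rw [soPsi, sum_congr rfl fun j hj => ent_rootElt hb c
      (by simp at hj; omega) (by simp at hj; omega) (by omega),
    ent_rootElt hb c (by omega) (by omega) (by omega),
    ent_rootElt hb c (by omega) (by omega) (by omega)]

theorem soPsi_rootElt_of_lt {i : ℕ} (hi : i + 2 < l) (c : F) :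
    soPsi F ψ l (rootElt l ⟨i, by omega⟩ ⟨i+1, by omega⟩ c) = ψ c := by
  rw [soPsi_rootElt ψ (by omega) (by simp; omega)]
  simp only [add_left_inj, and_self, sum_ite_eq', mem_range]
  rw [if_pos (by omega), if_neg (by omega), if_neg (by omega)]
  ring_nf

theorem soPsi_rootElt_of_add_two_eq {i : ℕ} (hi : i + 2 = l) (c : F) :
    soPsi F ψ l (rootElt l ⟨i, by omega⟩ ⟨i+1, by omega⟩ c) = ψ (4⁻¹ * c) := by
  rw [soPsi_rootElt ψ (by omega) (by simp; omega)]
  simp only [add_left_inj, and_self, sum_ite_eq', mem_range]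
  rw [if_neg (by omega), if_pos (by omega), if_neg (by omega)]
  ring_nf

theorem soPsi_rootElt_add_two {i : ℕ} (hi : i + 2 = l) (c : F) :
    soPsi F ψ l (rootElt l ⟨i, by omega⟩ ⟨i+2, by omega⟩ c) = ψ (-2⁻¹ * c) := by
  rw [soPsi_rootElt ψ (by omega) (by simp; omega), sum_eq_zero fun j _ => if_neg (by simp; omega),
    if_neg (by simp; omega), if_pos (by simp; omega)]
  ring_nf

end RootElements

section Torus

variable {F : Type} [Field F] {l : ℕ}

theorem mul_rev_eq_one_of_diagonal_mem_SOset {m : ℕ} {d : Fin m → F}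
    (h : diagonal d ∈ SOset F m) (i : Fin m) : d i * d i.rev = 1 := by
  have := congrFun (congrFun h.2 i) i.rev
  rwa [diagonal_transpose, mul_diagonal, diagonal_mul, matJ_apply, if_pos rfl, mul_one] at this

variable {d : Fin (2*l) → F}

theorem inv_diagonal_eq_diagonal_rev (hd : ∀ i, d i * d i.rev = 1) :
    (diagonal d)⁻¹ = diagonal (fun i => d i.rev) :=
  inv_eq_left_inv (by
    rw [diagonal_mul_diagonal, ← diagonal_one]
    congr 1
    ext i
    simpa [mul_comm] using hd i)

theorem diagonal_conj_apply (hd : ∀ i, d i * d i.rev = 1) (u : Matrix (Fin (2*l)) (Fin (2*l)) F)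
    (p q : Fin (2*l)) :
    (diagonal d * u * (diagonal d)⁻¹) p q = d p * u p q * d q.rev := by
  rw [inv_diagonal_eq_diagonal_rev hd, mul_diagonal, diagonal_mul]

theorem diagonal_conj_rootElt (hd : ∀ i, d i * d i.rev = 1) {a b : Fin (2*l)} (hab : a ≠ b)
    (c : F) :
    diagonal d * rootElt l a b c * (diagonal d)⁻¹ = rootElt l a b (d a * d b.rev * c) := by
  ext p q
  rw [diagonal_conj_apply hd]
  simp only [rootElt, of_apply]
  split_ifs <;> simp_all <;> ring

theorem diagonal_conj_mem_USO (hdSO : diagonal d ∈ SOset F (2*l))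
    {u : Matrix (Fin (2*l)) (Fin (2*l)) F} (hu : u ∈ USO F l) :
    diagonal d * u * (diagonal d)⁻¹ ∈ USO F l := by
  have hd := mul_rev_eq_one_of_diagonal_mem_SOset hdSO
  refine ⟨⟨fun i j h => ?_, fun i => ?_⟩,
    mul_mem_SOset (mul_mem_SOset hdSO hu.2) (inv_mem_SOset hdSO)⟩
  · rw [diagonal_conj_apply hd, hu.1.1 i j h, mul_zero, zero_mul]
  · rw [diagonal_conj_apply hd, hu.1.2 i, mul_one, hd]

end Torus

section TwistedCharacter

variable {F : Type} [Field F] {l : ℕ}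

def twistedChar (ψ : AddChar F ℂ) (l : ℕ) (t u : Matrix (Fin (2*l)) (Fin (2*l)) F) : ℂ :=
  (soPsi F ψ l u)⁻¹ * soPsi F ψ l (t * u * t⁻¹)

variable (ψ : AddChar F ℂ) {t : Matrix (Fin (2*l)) (Fin (2*l)) F}

theorem twistedChar_mul (ht : t ∈ SOset F (2*l)) (htU : ∀ u ∈ USO F l, t * u * t⁻¹ ∈ USO F l)
    (h2 : (2 : F) ≠ 0) (hl : 2 ≤ l) {u v : Matrix (Fin (2*l)) (Fin (2*l)) F}
    (hu : u ∈ USO F l) (hv : v ∈ USO F l) :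
    twistedChar ψ l t (u * v) = twistedChar ψ l t u * twistedChar ψ l t v := by
  have hconj : t * (u * v) * t⁻¹ = (t * u * t⁻¹) * (t * v * t⁻¹) := by
    simp only [mul_assoc, nonsing_inv_mul_cancel_left _ _ (isUnit_det_of_mem_SOset ht)]
  simp only [twistedChar, hconj, soPsi_mul ψ h2 hl hu hv,
    soPsi_mul ψ h2 hl (htU u hu) (htU v hv), mul_inv]
  ring

variable [Fintype F]

theorem WhFunctional.map_ρ_projection {π : FRep F (2*l) (SOset F (2*l))} {Γ : π.V →ₗ[ℂ] ℂ}
    (hΓ : WhFunctional F ψ l π.ρ Γ) (ht : t ∈ SOset F (2*l))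
    (htU : ∀ u ∈ USO F l, t * u * t⁻¹ ∈ USO F l) (v : π.V) :
    Γ (π.ρ t (∑ u, if u ∈ USO F l then (soPsi F ψ l u)⁻¹ • π.ρ u v else 0))
      = (∑ u, if u ∈ USO F l then twistedChar ψ l t u else 0) * Γ (π.ρ t v) := by
  rw [map_sum, map_sum, sum_mul]
  refine sum_congr rfl fun u _ => ?_
  split_ifs with hu
  · have hρ : π.ρ t (π.ρ u v) = π.ρ (t * u * t⁻¹) (π.ρ t v) := by
      rw [← LinearMap.comp_apply, ← π.map_mul _ ht _ hu.2, ← LinearMap.comp_apply,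
        ← π.map_mul _ (htU u hu).2 _ ht, mul_assoc (t * u),
        nonsing_inv_mul _ (isUnit_det_of_mem_SOset ht), mul_one]
    rw [map_smul, map_smul, hρ, hΓ.2 _ (htU u hu), twistedChar, smul_eq_mul]
    ring
  · simp

theorem twistedChar_sum_ne_zero_of_bessel_ne_zero (ht : t ∈ SOset F (2*l))
    (htU : ∀ u ∈ USO F l, t * u * t⁻¹ ∈ USO F l) {π : FRep F (2*l) (SOset F (2*l))}
    {B : Matrix (Fin (2*l)) (Fin (2*l)) F → ℂ} (hB : IsBesselOf F ψ l π.ρ B) (hnz : B t ≠ 0) :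
    (∑ u, if u ∈ USO F l then twistedChar ψ l t u else 0) ≠ 0 := by
  obtain ⟨Γ, hΓ, v, v₀, rfl, -, hB⟩ := hB
  intro hS
  apply hnz
  rw [hB, map_smul, map_smul, hΓ.map_ρ_projection ψ ht htU, hS, zero_mul, smul_zero, zero_div]

end TwistedCharacter

section SimpleRoots

variable {F : Type} [Field F] {l : ℕ}

theorem mul_rev_eq_one_of_twistedChar_sum_ne_zero [Fintype F] (ψ : AddChar F ℂ) (hψ : ψ ≠ 1)
    (h2 : (2 : F) ≠ 0) (hl : 2 ≤ l) {d : Fin (2*l) → F} (hdSO : diagonal d ∈ SOset F (2*l))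
    (hS : (∑ u, if u ∈ USO F l then twistedChar ψ l (diagonal d) u else 0) ≠ 0)
    (a b : Fin (2*l)) (hab : a < b) (hab' : a ≠ b.rev) {k : F} (hk : k ≠ 0)
    (hroot : ∀ c, soPsi F ψ l (rootElt l a b c) = ψ (k * c)) : d a * d b.rev = 1 := by
  by_contra hD
  obtain ⟨x, hx⟩ := AddChar.ne_one_iff.mp hψ
  have hkD : k * (d a * d b.rev - 1) ≠ 0 := mul_ne_zero hk (sub_ne_zero.mpr hD)
  set c := x / (k * (d a * d b.rev - 1))
  have hc : k * (d a * d b.rev - 1) * c = x := mul_div_cancel₀ x hkD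
  let g : (Matrix (Fin (2*l)) (Fin (2*l)) F)ˣ :=
    ⟨rootElt l a b c, rootElt l a b (-c),
      by rw [rootElt_mul_rootElt hab.ne, add_neg_cancel, rootElt_zero],
      by rw [rootElt_mul_rootElt hab.ne, neg_add_cancel, rootElt_zero]⟩
  have htU : ∀ u ∈ USO F l, diagonal d * u * (diagonal d)⁻¹ ∈ USO F l :=
    fun u hu => diagonal_conj_mem_USO hdSO hu
  refine hS (sum_ite_mem_eq_zero_of_map_mul (fun u hu v hv => mul_mem_USO hu hv) g
    (rootElt_mem_USO hab hab' c) (rootElt_mem_USO hab hab' (-c))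
    (fun u hu => twistedChar_mul ψ hdSO htU h2 hl (rootElt_mem_USO hab hab' c) hu) ?_)
  rw [twistedChar, diagonal_conj_rootElt (mul_rev_eq_one_of_diagonal_mem_SOset hdSO) hab.ne,
    hroot, hroot, ← AddChar.map_neg_eq_inv, ← AddChar.map_add_eq_mul]
  convert hx using 2
  linear_combination hc

/-- `d a * d b.rev` is the value at `diagonal d` of the root `ε_a - ε_b`: `hsucc` and `hlast` say
that the simple roots `ε_i - ε_{i+1}` and `ε_{l-2} + ε_{l-1}` are trivial there. -/
theorem diagonal_eq_one_or_neg_one (hl : 2 ≤ l) {d : Fin (2*l) → F} (hd : ∀ i, d i * d i.rev = 1)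
    (hsucc : ∀ i (hi : i + 1 < l), d ⟨i, by omega⟩ * d (Fin.rev ⟨i+1, by omega⟩) = 1)
    (hlast : ∀ i (hi : i + 2 = l), d ⟨i, by omega⟩ * d (Fin.rev ⟨i+2, by omega⟩) = 1) :
    diagonal d = 1 ∨ diagonal d = -1 := by
  set ε := d ⟨0, by omega⟩
  have hlow : ∀ n (hn : n < l), d ⟨n, by omega⟩ = ε := by
    intro n
    induction n with
    | zero => intro; rfl
    | succ n ih =>
      intro hn
      have h := hd ⟨n+1, by omega⟩
      rw [← ih (by omega)]
      exact mul_right_cancel₀ (right_ne_zero_of_mul_eq_one h) (h.trans (hsucc n hn).symm)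
  have hε : ε * ε = 1 := by
    have hrev : (Fin.rev ⟨l-2+2, by omega⟩ : Fin (2*l)) = ⟨l-1, by omega⟩ :=
      Fin.ext (by simp; omega)
    have h := hlast (l-2) (by omega)
    rwa [hrev, hlow _ (by omega), hlow _ (by omega)] at h
  have hall : ∀ i, d i = ε := by
    intro i
    rcases lt_or_ge (i : ℕ) l with h | h
    · exact hlow i h
    · have h1 := hd i.rev
      rw [Fin.rev_rev, hlow _ (by rw [Fin.val_rev]; omega)] at h1
      exact mul_left_cancel₀ (left_ne_zero_of_mul_eq_one hε) (h1.trans hε.symm)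
  rw [funext hall]
  rcases mul_self_eq_one_iff.mp hε with h | h
  · exact Or.inl (by rw [h, diagonal_one])
  · exact Or.inr (by rw [h, ← diagonal_one, ← diagonal_neg])

end SimpleRoots

end SOConverse

open SOConverse in
theorem bessel_torus_support_central_general
    (F : Type) [Field F] [Fintype F] (hF : ringChar F ≠ 2)
    (ψ : AddChar F ℂ) (hψ : ψ ≠ 1)
    (l : ℕ) (hl : 2 ≤ l)
    (π : FRep F (2*l) (SOset F (2*l)))
    (B : Matrix (Fin (2*l)) (Fin (2*l)) F → ℂ) (hB : IsBesselOf F ψ l π.ρ B)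
    (t : Matrix (Fin (2*l)) (Fin (2*l)) F) (ht : t ∈ TSO F l) (hnz : B t ≠ 0) :
    t = 1 ∨ t = -1 := by
  have h2 : (2 : F) ≠ 0 := Ring.two_ne_zero hF
  have h4 : (4 : F) ≠ 0 := by simpa [show (4 : F) = 2 * 2 by norm_num] using h2
  obtain ⟨d, rfl⟩ : ∃ d, t = Matrix.diagonal d :=
    ⟨t.diag, (Matrix.IsDiag.diagonal_diag ht.1.1).symm⟩
  have hS := twistedChar_sum_ne_zero_of_bessel_ne_zero ψ ht.2
    (fun u hu => diagonal_conj_mem_USO ht.2 hu) hB hnz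
  have hroot := mul_rev_eq_one_of_twistedChar_sum_ne_zero ψ hψ h2 hl ht.2 hS
  refine diagonal_eq_one_or_neg_one hl (mul_rev_eq_one_of_diagonal_mem_SOset ht.2)
    (fun i hi => ?_) (fun i hi => ?_)
  · rcases (show i + 2 ≤ l by omega).lt_or_eq with hi' | hi'
    · exact hroot _ _ (by simp [Fin.lt_def]) (by simp [Fin.ext_iff]; omega) one_ne_zero
        (fun c => by rw [one_mul]; exact soPsi_rootElt_of_lt ψ hi' c)
    · exact hroot _ _ (by simp [Fin.lt_def]) (by simp [Fin.ext_iff]; omega) (inv_ne_zero h4)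
        (soPsi_rootElt_of_add_two_eq ψ hi')
  · exact hroot _ _ (by simp [Fin.lt_def]) (by simp [Fin.ext_iff]; omega)
      (neg_ne_zero.mpr (inv_ne_zero h2)) (soPsi_rootElt_add_two ψ hi)

open SOConverse in
/-- If the normalized Bessel function is nonzero at a torus element `t`, then `t` is
central, i.e. `t = ±I_{2l}`. -/
theorem bessel_torus_support_central
    (F : Type) [Field F] [Fintype F] (hF : ringChar F ≠ 2)
    (ψ : AddChar F ℂ) (hψ : ψ ≠ 1)
    (l : ℕ) (hl : 2 ≤ l)
    (π : FRep F (2*l) (SOset F (2*l)))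
    (hπirr : π.Irreducible) (hπgen : GenericOf F ψ l π.ρ)
    (B : Matrix (Fin (2*l)) (Fin (2*l)) F → ℂ) (hB : IsBesselOf F ψ l π.ρ B)
    (t : Matrix (Fin (2*l)) (Fin (2*l)) F) (ht : t ∈ TSO F l) (hnz : B t ≠ 0) :
    t = 1 ∨ t = -1 :=
  bessel_torus_support_central_general F hF ψ hψ l hl π B hB t ht hnz
end
end

section
/- Let w ∈ B_{l−1}(SO_{2l}) and w′ ∈ W(GL_l) with w = t_l(w′)·w̃_l. Then w′ = [[0, w″],[1, 0]] (i.e. the first column of w′ has its 1 in the last row and the remaining columns form w″ in the first l−1 rows) for some w″ ∈ W(GL_{l−1}). Conversely, if w ∈ B(SO_{2l}) satisfies w = t_l(w′)·w̃_l with w′ = [[0, w″],[1, 0]] for some w″ ∈ W(GL_{l−1}), then w ∈ B_{l−1}(SO_{2l}). -/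
/-!
Common definitions for formalizing "A Converse Theorem for Split SO(2l) over Finite Fields"
(Hazeltine–Liu).  We work with the split special orthogonal groups realized as sets of
matrices over a finite field `F` of odd characteristic, and with complex representations
encoded as functions from matrices to linear endomorphisms that are multiplicative on the
relevant matrix group.
-/

open scoped Classical BigOperators

noncomputable section

/-!
Let `c` be the transposition of the two middle indices `l-1, l` (0-based) and `d` the transposition
of the two outer indices `0, 2l-1`, both viewed as permutation matrices. In either parity `w̃_l`
carries the middle pair of basis vectors onto the outer pair, so `w̃_l c = d w̃_l` and
`c (t_l(x) w̃_l) c = (c t_l(x) d) w̃_l`. Cancelling `w̃_l` (invertible since `w ∈ SO_{2l}`), the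
element `w = t_l(x) w̃_l` is fixed by `c`-conjugation iff `c t_l(x) d = t_l(x)`, i.e. iff the
block-diagonal permutation matrix `t_l(x) = diag(x, x*)` carries the outer pair onto the middle
pair. Since `x* = J x J`, this happens exactly when the first column of `x` has its `1` in the last
row, and a permutation matrix with this corner entry is `[[0, w''], [1, 0]]` where `w''` is
obtained by deleting that row and column.
-/

namespace SOConverse

open scoped Matrix

section PermMatrix

variable {F : Type} [Field F] {m : ℕ} {A : Matrix (Fin m) (Fin m) F}

theorem IsPermMatrix.transpose (hA : IsPermMatrix A) : IsPermMatrix Aᵀ :=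
  ⟨fun i j => hA.1 j i, hA.2.2, hA.2.1⟩

theorem IsPermMatrix.row_eq_ite (hA : IsPermMatrix A) {i j : Fin m} (hij : A i j = 1)
    (k : Fin m) : A i k = if k = j then 1 else 0 := by
  split_ifs with hk
  · rwa [hk]
  · exact (hA.1 i k).resolve_right fun h => hk ((hA.2.1 i).unique h hij)

theorem IsPermMatrix.col_eq_ite (hA : IsPermMatrix A) {i j : Fin m} (hij : A i j = 1)
    (k : Fin m) : A k j = if k = i then 1 else 0 :=
  hA.transpose.row_eq_ite hij k

theorem IsPermMatrix.mul_transpose_self (hA : IsPermMatrix A) : A * Aᵀ = 1 := by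
  ext i k
  obtain ⟨j, hj, -⟩ := hA.2.1 i
  rw [Matrix.mul_apply, Finset.sum_eq_single j (fun j' _ hj' => by
    rw [hA.row_eq_ite hj, if_neg hj', zero_mul]) (by simp)]
  simp [hj, hA.col_eq_ite hj, Matrix.one_apply, eq_comm]

theorem matJ_eq_permMatrix : matJ F m = (Fin.revPerm).permMatrix F := by
  ext i k
  simp only [matJ, Matrix.of_apply, PEquiv.toMatrix_apply, Equiv.toPEquiv_apply,
    Option.mem_def, Option.some.injEq, Fin.revPerm_apply, Fin.ext_iff, Fin.val_rev]
  congr 1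
  apply propext
  omega

theorem IsPermMatrix.astar_apply (hA : IsPermMatrix A) (p q : Fin m) :
    astar A p q = A p.rev q.rev := by
  rw [astar, Matrix.inv_eq_right_inv hA.mul_transpose_self, Matrix.transpose_transpose,
    matJ_eq_permMatrix, PEquiv.toMatrix_toPEquiv_mul, PEquiv.mul_toMatrix_toPEquiv]
  simp

theorem IsPermMatrix.ent_eq_ite (hA : IsPermMatrix A) {r c : ℕ} (hr : r < m) (hc : c < m)
    (h : A ⟨r, hr⟩ ⟨c, hc⟩ = 1) (i k : ℕ) (hik : i = r ∨ k = c) :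
    ent A i k = if i = r ∧ k = c then 1 else 0 := by
  unfold ent
  split_ifs with hb hrc hrc
  · obtain ⟨rfl, rfl⟩ := hrc
    exact h
  · rcases hik with rfl | rfl
    · rw [hA.row_eq_ite h, if_neg]
      exact fun e => hrc ⟨rfl, congrArg Fin.val e⟩
    · rw [hA.col_eq_ite h, if_neg]
      exact fun e => hrc ⟨congrArg Fin.val e, rfl⟩
  · omega
  · rfl

end PermMatrix

section Submatrix

variable {F : Type} [Field F] {n : ℕ} {A : Matrix (Fin (n+1)) (Fin (n+1)) F} {r c : Fin (n+1)}

theorem forall_existsUnique_iff_submatrix_succAbove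
    (hr : ∀ k, A r k = if k = c then 1 else 0) (hc : ∀ i, A i c = if i = r then 1 else 0) :
    (∀ i, ∃! j, A i j = 1) ↔ ∀ a, ∃! b, A.submatrix r.succAbove c.succAbove a b = 1 := by
  have hne : ∀ a j, A (r.succAbove a) j = 1 → j ≠ c := by
    rintro a j hj rfl
    rw [hc, if_neg (Fin.succAbove_ne r a)] at hj
    exact zero_ne_one hj
  constructor
  · intro h a
    obtain ⟨j, hj, hu⟩ := h (r.succAbove a)
    obtain ⟨b, rfl⟩ := Fin.exists_succAbove_eq (hne a j hj)
    exact ⟨b, hj, fun b' hb' => Fin.succAbove_right_injective (hu _ hb')⟩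
  · intro h i
    rcases Fin.eq_self_or_eq_succAbove r i with rfl | ⟨a, rfl⟩
    · exact ⟨c, (hr c).trans (if_pos rfl), fun j hj => by simpa [hr] using hj⟩
    · obtain ⟨b, hb, hu⟩ := h a
      refine ⟨c.succAbove b, hb, fun j hj => ?_⟩
      obtain ⟨b', rfl⟩ := Fin.exists_succAbove_eq (hne a j hj)
      rw [hu b' hj]

theorem isPermMatrix_iff_submatrix_succAbove
    (hr : ∀ k, A r k = if k = c then 1 else 0) (hc : ∀ i, A i c = if i = r then 1 else 0) :
    IsPermMatrix A ↔ IsPermMatrix (A.submatrix r.succAbove c.succAbove) := by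
  have h01 : (∀ i j, A i j = 0 ∨ A i j = 1) ↔
      ∀ a b, A (r.succAbove a) (c.succAbove b) = 0 ∨ A (r.succAbove a) (c.succAbove b) = 1 := by
    refine ⟨fun h a b => h _ _, fun h i j => ?_⟩
    rcases Fin.eq_self_or_eq_succAbove r i with rfl | ⟨a, rfl⟩
    · rw [hr]; split_ifs <;> simp
    rcases Fin.eq_self_or_eq_succAbove c j with rfl | ⟨b, rfl⟩
    · rw [hc, if_neg (Fin.succAbove_ne r a)]; simp
    exact h a b
  exact and_congr h01 (and_congr (forall_existsUnique_iff_submatrix_succAbove hr hc)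
    (forall_existsUnique_iff_submatrix_succAbove (A := Aᵀ) hc hr))

end Submatrix

section Swap

variable {n R : Type*} [Fintype n] [DecidableEq n] [Semiring R]

theorem swap_mul_mul_swap_apply (M : Matrix n n R) (a b p q i k : n) :
    (Matrix.swap R a b * M * Matrix.swap R p q) i k =
      M (Equiv.swap a b i) (Equiv.swap p q k) := by
  simp [Matrix.swap, PEquiv.toMatrix_toPEquiv_mul, PEquiv.mul_toMatrix_toPEquiv]

theorem swap_mul_mul_swap_eq_self {M : Matrix n n R} {a b p q : n}
    (ha : ∀ k, M a k = if k = p then 1 else 0) (hb : ∀ k, M b k = if k = q then 1 else 0)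
    (hp : ∀ i, M i p = if i = a then 1 else 0) (hq : ∀ i, M i q = if i = b then 1 else 0) :
    Matrix.swap R a b * M * Matrix.swap R p q = M := by
  ext i k
  rw [swap_mul_mul_swap_apply]
  by_cases hia : i = a
  · subst hia
    simp only [Equiv.swap_apply_left, hb, ha, Equiv.swap_apply_eq_iff, Equiv.swap_apply_right]
  by_cases hib : i = b
  · subst hib
    simp only [Equiv.swap_apply_right, hb, ha, Equiv.swap_apply_eq_iff, Equiv.swap_apply_left]
  rw [Equiv.swap_apply_of_ne_of_ne hia hib]
  by_cases hkp : k = p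
  · subst hkp; rw [Equiv.swap_apply_left, hp, hq, if_neg hia, if_neg hib]
  by_cases hkq : k = q
  · subst hkq; rw [Equiv.swap_apply_right, hp, hq, if_neg hia, if_neg hib]
  rw [Equiv.swap_apply_of_ne_of_ne hkp hkq]

theorem swap_mul_swap_comm {a b p q : n} (h : [a, b, p, q].Nodup) :
    Matrix.swap R a b * Matrix.swap R p q = Matrix.swap R p q * Matrix.swap R a b := by
  simp only [Matrix.swap, ← Matrix.permMatrix_mul, (Equiv.Perm.disjoint_swap_swap h).commute.eq]

end Swap

theorem val_swap_apply {n : ℕ} (a b x : Fin n) :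
    (Equiv.swap a b x : ℕ) =
      if (x : ℕ) = a then (b : ℕ) else if (x : ℕ) = b then (a : ℕ) else x := by
  simp only [Equiv.swap_apply_def, Fin.ext_iff, apply_ite Fin.val]

theorem val_swap_cases {n : ℕ} (a b x : Fin n) :
    ((x : ℕ) = a ∧ (Equiv.swap a b x : ℕ) = b) ∨ ((x : ℕ) = b ∧ (Equiv.swap a b x : ℕ) = a) ∨
      ((x : ℕ) ≠ a ∧ (x : ℕ) ≠ b ∧ (Equiv.swap a b x : ℕ) = x) := by
  rw [val_swap_apply]
  split_ifs <;> omega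

variable {F : Type} [Field F] {l : ℕ}

section WeylElements

theorem cmat_eq_swap (hl : 0 < l) :
    cmat F l = Matrix.swap F (⟨l - 1, by omega⟩ : Fin (2*l)) ⟨l, by omega⟩ := by
  ext i k
  simp only [cmat, Matrix.swap, Matrix.of_apply, PEquiv.toMatrix_apply, Equiv.toPEquiv_apply,
    Option.mem_def, Option.some.injEq, Equiv.swap_apply_def, Fin.ext_iff, apply_ite Fin.val]
  split_ifs <;> first | rfl | omega

theorem wtildelp_mul_swap (hl : 2 ≤ l) :
    wtildelp F l * Matrix.swap F (⟨l - 1, by omega⟩ : Fin (2*l)) ⟨l, by omega⟩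
      = Matrix.swap F (⟨0, by omega⟩ : Fin (2*l)) ⟨2*l - 1, by omega⟩ * wtildelp F l := by
  ext i j
  simp only [Matrix.swap, PEquiv.toMatrix_toPEquiv_mul, PEquiv.mul_toMatrix_toPEquiv,
    Matrix.submatrix_apply, id, Equiv.symm_swap]
  have hi := val_swap_cases (⟨0, by omega⟩ : Fin (2*l)) ⟨2*l - 1, by omega⟩ i
  have hj := val_swap_cases (⟨l - 1, by omega⟩ : Fin (2*l)) ⟨l, by omega⟩ j
  generalize Equiv.swap _ _ i = i' at *
  generalize Equiv.swap _ _ j = j' at *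
  simp only at hi hj
  unfold wtildelp
  split_ifs <;> simp only [Matrix.of_apply] <;> split_ifs <;> first | rfl | omega

theorem wtildel_mul_swap (hl : 2 ≤ l) :
    wtildel F l * Matrix.swap F (⟨l - 1, by omega⟩ : Fin (2*l)) ⟨l, by omega⟩
      = Matrix.swap F (⟨0, by omega⟩ : Fin (2*l)) ⟨2*l - 1, by omega⟩ * wtildel F l := by
  have hW := wtildelp_mul_swap (F := F) hl
  unfold wtildel
  split_ifs
  · exact hW
  set c := Matrix.swap F (⟨l - 1, by omega⟩ : Fin (2*l)) ⟨l, by omega⟩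
  set d := Matrix.swap F (⟨0, by omega⟩ : Fin (2*l)) ⟨2*l - 1, by omega⟩
  have hcd : c * d = d * c := swap_mul_swap_comm (by simp [Fin.ext_iff]; omega)
  rw [cmat_eq_swap (by omega)]
  calc c * wtildelp F l * c * c = c * (wtildelp F l * c) * c := by
        rw [mul_assoc c _ c]
    _ = d * (c * wtildelp F l * c) := by
        rw [hW, ← mul_assoc c d, hcd]
        simp only [mul_assoc]

end WeylElements

section Tmat

variable {x : Matrix (Fin l) (Fin l) F}

theorem tmat_apply_of_lt {i : Fin (2*l)} (hi : (i : ℕ) < l) (k : Fin (2*l)) :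
    tmat F l l x i k = if (k : ℕ) < l then ent x i k else 0 := by
  unfold tmat
  split_ifs <;> simp only [Matrix.of_apply] <;> split_ifs <;> first | rfl | omega

theorem tmat_apply_of_le (hx : IsPermMatrix x) {i : Fin (2*l)} (hi : l ≤ (i : ℕ))
    (k : Fin (2*l)) :
    tmat F l l x i k = if l ≤ (k : ℕ) then ent x (2*l - 1 - i) (2*l - 1 - k) else 0 := by
  have hi' := i.isLt
  unfold tmat
  simp only [Matrix.of_apply, ent]
  split_ifs <;> try omega
  · rw [hx.astar_apply]
    congr 1 <;> ext <;> simp only [Fin.val_rev] <;> omega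
  · rfl

theorem swap_mul_tmat_mul_swap_eq_iff (hl : 0 < l) (hx : IsPermMatrix x) :
    Matrix.swap F (⟨l - 1, by omega⟩ : Fin (2*l)) ⟨l, by omega⟩ * tmat F l l x *
        Matrix.swap F ⟨0, by omega⟩ ⟨2*l - 1, by omega⟩ = tmat F l l x ↔
      x ⟨l - 1, by omega⟩ ⟨0, hl⟩ = 1 := by
  constructor
  · intro h
    obtain ⟨r, hr, -⟩ := hx.2.2 ⟨0, hl⟩
    suffices hr' : r = ⟨l - 1, by omega⟩ by rwa [← hr']
    by_contra hne
    have hrl : (r : ℕ) < l - 1 :=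
      lt_of_le_of_ne (Nat.le_sub_one_of_lt r.isLt) fun h => hne (Fin.ext h)
    -- the `(r, 0)` entry is `x r 0 = 1` on the right but `t(r, 2l-1) = 0` on the left
    have := congrFun₂ h ⟨r, by omega⟩ ⟨0, by omega⟩
    rw [swap_mul_mul_swap_apply, Equiv.swap_apply_of_ne_of_ne (by simp [Fin.ext_iff]; omega)
      (by simp [Fin.ext_iff]; omega), Equiv.swap_apply_left, tmat_apply_of_lt (by exact r.isLt),
      tmat_apply_of_lt (by exact r.isLt), if_neg (by simp; omega), if_pos (by simp; omega),
      ent, dif_pos ⟨r.isLt, hl⟩] at this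
    exact zero_ne_one (this.trans hr)
  · intro h1
    have hent := hx.ent_eq_ite _ _ h1
    apply swap_mul_mul_swap_eq_self <;> intro k
    · rw [tmat_apply_of_lt (by simp; omega)]
      simp (disch := omega) only [hent, Fin.ext_iff, true_and]
      split_ifs <;> first | rfl | omega
    · rw [tmat_apply_of_le hx le_rfl]
      simp (disch := omega) only [hent, Fin.ext_iff]
      split_ifs <;> first | rfl | omega
    all_goals
      rcases lt_or_ge (k : ℕ) l with hk | hk
      · rw [tmat_apply_of_lt hk]
        simp (disch := omega) only [hent, Fin.ext_iff, and_true]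
        split_ifs <;> first | rfl | omega
      · rw [tmat_apply_of_le hx hk]
        simp (disch := omega) only [hent, Fin.ext_iff]
        split_ifs <;> first | rfl | omega

theorem isUnit_det_of_mul_mem_SOset {m : ℕ} {A B : Matrix (Fin m) (Fin m) F}
    (h : A * B ∈ SOset F m) : IsUnit B.det :=
  .of_mul_eq_one_right A.det (by rw [← Matrix.det_mul]; exact h.1)

theorem cmat_conj_tmat_mul_wtildel_eq_iff (hl : 2 ≤ l) (hx : IsPermMatrix x)
    (hW : IsUnit (wtildel F l).det) :
    cmat F l * (tmat F l l x * wtildel F l) * cmat F l = tmat F l l x * wtildel F l ↔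
      x ⟨l - 1, by omega⟩ ⟨0, by omega⟩ = 1 := by
  have h : cmat F l * (tmat F l l x * wtildel F l) * cmat F l =
      Matrix.swap F (⟨l - 1, by omega⟩ : Fin (2*l)) ⟨l, by omega⟩ * tmat F l l x *
        Matrix.swap F ⟨0, by omega⟩ ⟨2*l - 1, by omega⟩ * wtildel F l := by
    rw [cmat_eq_swap (by omega), mul_assoc, mul_assoc, wtildel_mul_swap hl]
    simp only [mul_assoc]
  rw [h, ((Matrix.isUnit_iff_isUnit_det _).2 hW).mul_left_inj]
  exact swap_mul_tmat_mul_swap_eq_iff (by omega) hx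

end Tmat

section CornerForm

variable {n : ℕ}

theorem cornerForm_last_apply (w'' : Matrix (Fin n) (Fin n) F) (k : Fin (n+1)) :
    cornerForm F (n+1) w'' (Fin.last n) k = if k = 0 then 1 else 0 := by
  simp only [cornerForm, Matrix.of_apply, Fin.val_last, Nat.add_sub_cancel, if_true, Fin.ext_iff,
    Fin.val_zero]

theorem cornerForm_apply_zero (w'' : Matrix (Fin n) (Fin n) F) (i : Fin (n+1)) :
    cornerForm F (n+1) w'' i 0 = if i = Fin.last n then 1 else 0 := by
  simp only [cornerForm, Matrix.of_apply, Fin.val_last, Nat.add_sub_cancel, Fin.ext_iff,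
    Fin.val_zero]
  split_ifs <;> rfl

theorem cornerForm_submatrix (w'' : Matrix (Fin n) (Fin n) F) :
    (cornerForm F (n+1) w'').submatrix Fin.castSucc Fin.succ = w'' := by
  ext a b
  simp only [cornerForm, Matrix.submatrix_apply, Matrix.of_apply, Fin.val_castSucc, Fin.val_succ,
    Nat.add_sub_cancel, if_neg a.isLt.ne, Nat.succ_ne_zero, if_false, ent,
    dif_pos (And.intro a.isLt b.isLt)]
  rfl

theorem isPermMatrix_cornerForm_iff (w'' : Matrix (Fin n) (Fin n) F) :
    IsPermMatrix (cornerForm F (n+1) w'') ↔ IsPermMatrix w'' := by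
  rw [isPermMatrix_iff_submatrix_succAbove (cornerForm_last_apply w'')
    (cornerForm_apply_zero w''), Fin.succAbove_last, Fin.succAbove_zero, cornerForm_submatrix]

variable {A : Matrix (Fin (n+1)) (Fin (n+1)) F}

theorem IsPermMatrix.submatrix_castSucc_succ (hA : IsPermMatrix A) (h : A (Fin.last n) 0 = 1) :
    IsPermMatrix (A.submatrix Fin.castSucc Fin.succ) := by
  rw [← Fin.succAbove_last, ← Fin.succAbove_zero]
  exact (isPermMatrix_iff_submatrix_succAbove (hA.row_eq_ite h) (hA.col_eq_ite h)).1 hA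

theorem IsPermMatrix.eq_cornerForm (hA : IsPermMatrix A) (h : A (Fin.last n) 0 = 1) :
    A = cornerForm F (n+1) (A.submatrix Fin.castSucc Fin.succ) := by
  ext i k
  rcases Fin.eq_castSucc_or_eq_last i with ⟨a, rfl⟩ | rfl
  · rcases Fin.eq_zero_or_eq_succ k with rfl | ⟨b, rfl⟩
    · rw [cornerForm_apply_zero, hA.col_eq_ite h]
    · exact (congrFun₂ (cornerForm_submatrix (A.submatrix Fin.castSucc Fin.succ)) a b).symm
  · rw [cornerForm_last_apply, hA.row_eq_ite h]

end CornerForm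

end SOConverse

open SOConverse in
theorem Bsetlm1_corner_form_general
    (F : Type) [Field F]
    (l : ℕ) (hl : 2 ≤ l) :
    (∀ (w : Matrix (Fin (2*l)) (Fin (2*l)) F) (w' : Matrix (Fin l) (Fin l) F),
        w ∈ Bsetlm1 F l → IsPermMatrix w' → w = tmat F l l w' * wtildel F l →
        ∃ w'' : Matrix (Fin (l-1)) (Fin (l-1)) F,
          IsPermMatrix w'' ∧ w' = cornerForm F l w'') ∧
    (∀ w : Matrix (Fin (2*l)) (Fin (2*l)) F, w ∈ BesselSupport F l →
        ∀ w'' : Matrix (Fin (l-1)) (Fin (l-1)) F, IsPermMatrix w'' →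
        w = tmat F l l (cornerForm F l w'') * wtildel F l → w ∈ Bsetlm1 F l) := by
  obtain ⟨n, rfl⟩ : ∃ n, l = n + 1 := ⟨l - 1, by omega⟩
  constructor
  · rintro w w' ⟨hB, -, hc⟩ hw' rfl
    have h1 : w' (Fin.last n) 0 = 1 :=
      (cmat_conj_tmat_mul_wtildel_eq_iff hl hw' (isUnit_det_of_mul_mem_SOset hB.1.1)).1 hc
    exact ⟨_, hw'.submatrix_castSucc_succ h1, hw'.eq_cornerForm h1⟩
  · rintro w hB w'' hw'' rfl
    have hC := (isPermMatrix_cornerForm_iff w'').2 hw''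
    refine ⟨hB, ⟨_, hC, rfl⟩,
      (cmat_conj_tmat_mul_wtildel_eq_iff hl hC (isUnit_det_of_mul_mem_SOset hB.1.1)).2 ?_⟩
    exact (cornerForm_last_apply w'' 0).trans (if_pos rfl)

open SOConverse in
/-- For `w ∈ B_{l-1}(SO_{2l})` with `w = t_l(w') w̃_l`, the permutation matrix `w'` has the
form `[[0, w''],[1, 0]]` with `w'' ∈ W(GL_{l-1})`; and conversely any `w` in the Bessel
support of this form lies in `B_{l-1}(SO_{2l})`. -/
theorem Bsetlm1_corner_form
    (F : Type) [Field F] [Fintype F] (hF : ringChar F ≠ 2)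
    (l : ℕ) (hl : 2 ≤ l) :
    (∀ (w : Matrix (Fin (2*l)) (Fin (2*l)) F) (w' : Matrix (Fin l) (Fin l) F),
        w ∈ Bsetlm1 F l → IsPermMatrix w' → w = tmat F l l w' * wtildel F l →
        ∃ w'' : Matrix (Fin (l-1)) (Fin (l-1)) F,
          IsPermMatrix w'' ∧ w' = cornerForm F l w'') ∧
    (∀ w : Matrix (Fin (2*l)) (Fin (2*l)) F, w ∈ BesselSupport F l →
        ∀ w'' : Matrix (Fin (l-1)) (Fin (l-1)) F, IsPermMatrix w'' →
        w = tmat F l l (cornerForm F l w'') * wtildel F l → w ∈ Bsetlm1 F l) :=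
  Bsetlm1_corner_form_general F l hl
end
end

section
/- A Weyl element w lies in B_{l−1}(SO_{2l}) if and only if w ∈ B(SO_{2l}) and there exists ω ∈ W(GL_{l−1}) with w = t_{l−1}(ω)·w̃_{l−1}. -/
/-!
Common definitions for formalizing "A Converse Theorem for Split SO(2l) over Finite Fields"
(Hazeltine–Liu).  We work with the split special orthogonal groups realized as sets of
matrices over a finite field `F` of odd characteristic, and with complex representations
encoded as functions from matrices to linear endomorphisms that are multiplicative on the
relevant matrix group.
-/

open scoped Classical BigOperators

noncomputable section

/-!
Indices are 0-based. Writing `ω̂ = [[0, ω], [1, 0]]` for `ω ∈ W(GL_{l-1})`, one has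
`t_{l-1}(ω) w̃_{l-1} = t_l(ω̂) w̃_l`: indeed `t_l(ω̂) = t_{l-1}(ω) P` for the permutation matrix `P`
of an explicit index shift, and `P w̃_l = w̃_{l-1}`. Moreover `c` commutes with `t_{l-1}(ω)`, which
acts trivially on the two middle coordinates `l-1, l`, and with `w̃_{l-1}`, whose middle block is
`I_2` or `J_2`.

Conversely, let `w = t_l(w') w̃_l` commute with `c`. For `1 ≤ k ≤ l-1` column `k+l` of `w̃_l` is
the `k`-th unit vector, so `w'_{l-1,k} = w_{l-1,k+l} = (cwc)_{l-1,k+l} = w_{l,k+l} = 0`. Hence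
`w'_{l-1,0} = 1`, and `w' = ω̂` where `ω` is `w'` with its last row and first column deleted.
-/

namespace SOConverse

variable {F : Type} [Field F] {l m n : ℕ}

theorem existsUnique_iff_of_injective {α β : Type*} {p : α → Prop} {g : β → α}
    (hg : Function.Injective g) (hp : ∀ a, p a → ∃ b, g b = a) :
    (∃! a, p a) ↔ ∃! b, p (g b) := by
  constructor
  · rintro ⟨a, ha, hu⟩
    obtain ⟨b, rfl⟩ := hp a ha
    exact ⟨b, ha, fun b' hb' => hg (hu _ hb')⟩
  · rintro ⟨b, hb, hu⟩
    refine ⟨g b, hb, fun a ha => ?_⟩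
    obtain ⟨b', rfl⟩ := hp a ha
    rw [hu b' ha]

section MonomialMul

variable {ι R : Type*} [Fintype ι] [DecidableEq ι] [NonAssocSemiring R]

theorem mul_apply_eq_of_col {B : Matrix ι ι R} (σ : ι → ι)
    (hB : ∀ k j, B k j = if k = σ j then 1 else 0) (A : Matrix ι ι R) (i j : ι) :
    (A * B) i j = A i (σ j) := by
  simp [Matrix.mul_apply, hB]

theorem mul_apply_eq_of_row {B : Matrix ι ι R} (σ : ι → ι)
    (hB : ∀ i k, B i k = if k = σ i then 1 else 0) (A : Matrix ι ι R) (i j : ι) :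
    (B * A) i j = A (σ i) j := by
  simp [Matrix.mul_apply, hB]

end MonomialMul

theorem matJ_apply_s9 (i j : Fin n) : matJ F n i j = if j = i.rev then 1 else 0 := by
  simp only [matJ, Matrix.of_apply, Fin.ext_iff, Fin.val_rev]
  exact if_congr (by omega) rfl rfl

theorem IsPermMatrix.eq_zero_of_ne_col {x : Matrix (Fin n) (Fin n) F} (hx : IsPermMatrix x)
    {i j j' : Fin n} (hij : x i j = 1) (hj : j' ≠ j) : x i j' = 0 :=
  (hx.1 i j').resolve_right fun h => hj ((hx.2.1 i).unique h hij)

theorem IsPermMatrix.eq_zero_of_ne_row {x : Matrix (Fin n) (Fin n) F} (hx : IsPermMatrix x)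
    {i i' j : Fin n} (hij : x i j = 1) (hi : i' ≠ i) : x i' j = 0 :=
  (hx.1 i' j).resolve_right fun h => hi ((hx.2.2 j).unique h hij)

theorem IsPermMatrix.apply_eq_one_of_forall_ne {x : Matrix (Fin n) (Fin n) F}
    (hx : IsPermMatrix x) {i j : Fin n} (h : ∀ j', j' ≠ j → x i j' = 0) : x i j = 1 := by
  obtain ⟨j', hj', -⟩ := hx.2.1 i
  by_cases e : j' = j
  · rwa [← e]
  · exact absurd ((h j' e).symm.trans hj') zero_ne_one

theorem IsPermMatrix.mul_transpose_self_s9 {x : Matrix (Fin n) (Fin n) F} (hx : IsPermMatrix x) :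
    x * x.transpose = 1 := by
  ext i j
  obtain ⟨k, hk, -⟩ := hx.2.1 i
  rw [Matrix.mul_apply, Finset.sum_eq_single k, Matrix.transpose_apply, hk, one_mul,
    Matrix.one_apply]
  · by_cases hij : i = j
    · rw [if_pos hij, ← hij, hk]
    · rw [if_neg hij, hx.eq_zero_of_ne_row hk (Ne.symm hij)]
  · intro k' _ hk'
    rw [hx.eq_zero_of_ne_col hk hk', zero_mul]
  · simp

theorem IsPermMatrix.astar_apply_s9 {x : Matrix (Fin n) (Fin n) F} (hx : IsPermMatrix x)
    (a b : Fin n) : astar x a b = x a.rev b.rev := by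
  rw [astar, Matrix.inv_eq_right_inv hx.mul_transpose_self_s9, Matrix.transpose_transpose,
    mul_apply_eq_of_col Fin.rev (fun k j => by
      rw [matJ_apply_s9]; exact if_congr (by rw [eq_comm, Fin.rev_eq_iff]) rfl rfl),
    mul_apply_eq_of_row Fin.rev matJ_apply_s9]

section Submatrix

variable {y : Matrix (Fin m) (Fin m) F} {r c : Fin m} {f g : Fin n → Fin m}

theorem IsPermMatrix.submatrix_of_apply_eq_one (hf : Function.Injective f) (hg : Function.Injective g)
    (hfr : ∀ i, (∃ a, f a = i) ↔ i ≠ r) (hgc : ∀ j, (∃ b, g b = j) ↔ j ≠ c)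
    (hy : IsPermMatrix y) (hrc : y r c = 1) :
    IsPermMatrix (y.submatrix f g) := by
  refine ⟨fun a b => hy.1 _ _, fun a => ?_, fun b => ?_⟩
  · refine (existsUnique_iff_of_injective hg fun j hj => (hgc j).2 ?_).1 (hy.2.1 (f a))
    rintro rfl
    exact zero_ne_one ((hy.eq_zero_of_ne_row hrc ((hfr _).1 ⟨a, rfl⟩)).symm.trans hj)
  · refine (existsUnique_iff_of_injective hf fun i hi => (hfr i).2 ?_).1 (hy.2.2 (g b))
    rintro rfl
    exact zero_ne_one ((hy.eq_zero_of_ne_col hrc ((hgc _).1 ⟨b, rfl⟩)).symm.trans hi)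

theorem isPermMatrix_of_submatrix (hf : Function.Injective f) (hg : Function.Injective g)
    (hfr : ∀ i, (∃ a, f a = i) ↔ i ≠ r) (hgc : ∀ j, (∃ b, g b = j) ↔ j ≠ c)
    (hrc : y r c = 1) (hrow : ∀ j, j ≠ c → y r j = 0)
    (hcol : ∀ i, i ≠ r → y i c = 0) (hs : IsPermMatrix (y.submatrix f g)) : IsPermMatrix y := by
  refine ⟨fun i j => ?_, fun i => ?_, fun j => ?_⟩
  · by_cases hi : i = r
    · subst hi
      by_cases hj : j = c
      · exact Or.inr (hj ▸ hrc)
      · exact Or.inl (hrow j hj)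
    · obtain ⟨a, rfl⟩ := (hfr i).2 hi
      by_cases hj : j = c
      · exact Or.inl (hj ▸ hcol _ hi)
      · obtain ⟨b, rfl⟩ := (hgc j).2 hj
        exact hs.1 a b
  · by_cases hi : i = r
    · subst hi
      exact ⟨c, hrc, fun j hj => by_contra fun hjc => zero_ne_one ((hrow j hjc).symm.trans hj)⟩
    · obtain ⟨a, rfl⟩ := (hfr i).2 hi
      refine (existsUnique_iff_of_injective hg fun j hj => (hgc j).2 ?_).2 (hs.2.1 a)
      rintro rfl
      exact zero_ne_one ((hcol _ hi).symm.trans hj)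
  · by_cases hj : j = c
    · subst hj
      exact ⟨r, hrc, fun i hi => by_contra fun hir => zero_ne_one ((hcol i hir).symm.trans hi)⟩
    · obtain ⟨b, rfl⟩ := (hgc j).2 hj
      refine (existsUnique_iff_of_injective hf fun i hi => (hfr i).2 ?_).2 (hs.2.2 b)
      rintro rfl
      exact zero_ne_one ((hrow _ hj).symm.trans hi)

theorem isPermMatrix_iff_submatrix (hf : Function.Injective f) (hg : Function.Injective g)
    (hfr : ∀ i, (∃ a, f a = i) ↔ i ≠ r) (hgc : ∀ j, (∃ b, g b = j) ↔ j ≠ c)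
    (hrc : y r c = 1) :
    IsPermMatrix y ↔
      (∀ j, j ≠ c → y r j = 0) ∧ (∀ i, i ≠ r → y i c = 0) ∧ IsPermMatrix (y.submatrix f g) :=
  ⟨fun hy => ⟨fun _ hj => hy.eq_zero_of_ne_col hrc hj, fun _ hi => hy.eq_zero_of_ne_row hrc hi,
      hy.submatrix_of_apply_eq_one hf hg hfr hgc hrc⟩,
    fun ⟨hrow, hcol, hs⟩ => isPermMatrix_of_submatrix hf hg hfr hgc hrc hrow hcol hs⟩

end Submatrix

def cornerMinor (y : Matrix (Fin l) (Fin l) F) : Matrix (Fin (l-1)) (Fin (l-1)) F :=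
  y.submatrix (Fin.castLE (Nat.sub_le l 1)) fun b => ⟨b + 1, by have := b.isLt; omega⟩

theorem isPermMatrix_iff_cornerMinor (hl : 0 < l) {y : Matrix (Fin l) (Fin l) F}
    (hy : y ⟨l-1, by omega⟩ ⟨0, hl⟩ = 1) :
    IsPermMatrix y ↔ (∀ j, j ≠ ⟨0, hl⟩ → y ⟨l-1, by omega⟩ j = 0) ∧
      (∀ i, i ≠ ⟨l-1, by omega⟩ → y i ⟨0, hl⟩ = 0) ∧ IsPermMatrix (cornerMinor y) := by
  refine isPermMatrix_iff_submatrix (Fin.castLE_injective _) (fun a b h => ?_) (fun i => ?_)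
    (fun j => ?_) hy
  · ext; simpa using congrArg Fin.val h
  · refine ⟨by rintro ⟨a, rfl⟩; simp [Fin.ext_iff]; omega, fun hi => ⟨⟨i, ?_⟩, rfl⟩⟩
    have := i.isLt; have : (i : ℕ) ≠ l-1 := fun h => hi (Fin.ext h); omega
  · refine ⟨by rintro ⟨b, rfl⟩; simp [Fin.ext_iff], fun hj => ⟨⟨j - 1, ?_⟩, ?_⟩⟩
    · have := j.isLt; omega
    · have : (j : ℕ) ≠ 0 := fun h => hj (Fin.ext h); ext; simp; omega

theorem cornerMinor_cornerForm (ω : Matrix (Fin (l-1)) (Fin (l-1)) F) :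
    cornerMinor (cornerForm F l ω) = ω := by
  ext a b
  simp [cornerMinor, cornerForm, ent, a.isLt.ne]

theorem ent_cornerForm (hl : 0 < l) (ω : Matrix (Fin (l-1)) (Fin (l-1)) F) (a b : ℕ) :
    ent (cornerForm F l ω) a b = if b = 0 then (if a = l-1 then 1 else 0) else ent ω a (b-1) := by
  simp only [ent, cornerForm, Matrix.of_apply]
  split_ifs <;> first | rfl | omega

theorem isPermMatrix_cornerForm (hl : 0 < l) {ω : Matrix (Fin (l-1)) (Fin (l-1)) F}
    (hω : IsPermMatrix ω) : IsPermMatrix (cornerForm F l ω) := by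
  refine (isPermMatrix_iff_cornerMinor hl (by simp [cornerForm])).2
    ⟨fun j hj => ?_, fun i hi => ?_, (cornerMinor_cornerForm ω).symm ▸ hω⟩
  · simpa [cornerForm, Fin.ext_iff] using hj
  · simpa [cornerForm, Fin.ext_iff] using hi

theorem IsPermMatrix.exists_eq_cornerForm (hl : 0 < l) {y : Matrix (Fin l) (Fin l) F}
    (hy : IsPermMatrix y) (h : y ⟨l-1, by omega⟩ ⟨0, hl⟩ = 1) :
    ∃ ω, IsPermMatrix ω ∧ y = cornerForm F l ω := by
  obtain ⟨hrow, hcol, hω⟩ := (isPermMatrix_iff_cornerMinor hl h).1 hy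
  refine ⟨cornerMinor y, hω, ?_⟩
  ext i j
  simp only [cornerForm, Matrix.of_apply]
  split_ifs with hi hj hj
  · obtain rfl : i = ⟨l-1, Nat.sub_lt hl Nat.one_pos⟩ := Fin.ext hi
    obtain rfl : j = ⟨0, hl⟩ := Fin.ext hj
    exact h
  · obtain rfl : i = ⟨l-1, Nat.sub_lt hl Nat.one_pos⟩ := Fin.ext hi
    exact hrow j fun e => hj (congrArg Fin.val e)
  · obtain rfl : j = ⟨0, hl⟩ := Fin.ext hj
    exact hcol i fun e => hi (congrArg Fin.val e)
  · have := i.isLt; have := j.isLt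
    rw [ent, dif_pos (by omega)]
    simp only [cornerMinor, Matrix.submatrix_apply]
    congr 1; ext; simp; omega

def midSwap (i : Fin (2*l)) : Fin (2*l) :=
  ⟨if (i : ℕ) = l-1 then l else if (i : ℕ) = l then l-1 else i, by
    have := i.isLt; split_ifs <;> omega⟩

-- The `_spec` lemmas unfold an index map into a disjunction of linear constraints for `omega`.
theorem midSwap_spec (i : Fin (2*l)) :
    ((i : ℕ) = l-1 ∧ (midSwap i : ℕ) = l) ∨ ((i : ℕ) = l ∧ (midSwap i : ℕ) = l-1) ∨
      ((i : ℕ) ≠ l-1 ∧ (i : ℕ) ≠ l ∧ (midSwap i : ℕ) = i) := by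
  simp only [midSwap]; split_ifs <;> omega

theorem midSwap_eq_iff (i j : Fin (2*l)) : midSwap i = j ↔ i = midSwap j := by
  have := midSwap_spec i; have := midSwap_spec j
  simp only [Fin.ext_iff]; omega

theorem midSwap_midSwap (i : Fin (2*l)) : midSwap (midSwap i) = i :=
  ((midSwap_eq_iff _ _).1 rfl).symm

theorem cmat_apply (i j : Fin (2*l)) : cmat F l i j = if j = midSwap i then 1 else 0 := by
  have := i.isLt; have := j.isLt
  simp only [cmat, midSwap, Matrix.of_apply, Fin.ext_iff]
  split_ifs <;> first | rfl | omega

theorem cmat_apply' (k j : Fin (2*l)) : cmat F l k j = if k = midSwap j then 1 else 0 := by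
  rw [cmat_apply]
  exact if_congr (by rw [eq_comm, midSwap_eq_iff]) rfl rfl

theorem cmat_conj_apply (A : Matrix (Fin (2*l)) (Fin (2*l)) F) (i j : Fin (2*l)) :
    (cmat F l * A * cmat F l) i j = A (midSwap i) (midSwap j) := by
  rw [mul_apply_eq_of_col midSwap cmat_apply', mul_apply_eq_of_row midSwap cmat_apply]

theorem cmat_mul_self : cmat F l * cmat F l = 1 := by
  ext i j
  rw [mul_apply_eq_of_row midSwap cmat_apply, cmat_apply, Matrix.one_apply, midSwap_midSwap]
  exact if_congr eq_comm rfl rfl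

def wtildenCol (j : Fin (2*l)) : Fin (2*l) :=
  ⟨if (j : ℕ) + 2 ≤ l then j + l + 1
    else if (j : ℕ) = l-1 then (if (l-1) % 2 = 1 then l else l-1)
    else if (j : ℕ) = l then (if (l-1) % 2 = 1 then l-1 else l)
    else j - (l+1), by have := j.isLt; split_ifs <;> omega⟩

theorem wtildenCol_spec (j : Fin (2*l)) :
    ((j : ℕ) + 2 ≤ l ∧ (wtildenCol j : ℕ) = j + l + 1) ∨
    ((j : ℕ) = l-1 ∧ (l-1) % 2 = 1 ∧ (wtildenCol j : ℕ) = l) ∨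
    ((j : ℕ) = l-1 ∧ (l-1) % 2 = 0 ∧ (wtildenCol j : ℕ) = l-1) ∨
    ((j : ℕ) = l ∧ (l-1) % 2 = 1 ∧ (wtildenCol j : ℕ) = l-1) ∨
    ((j : ℕ) = l ∧ (l-1) % 2 = 0 ∧ (wtildenCol j : ℕ) = l) ∨
    (l + 1 ≤ (j : ℕ) ∧ (wtildenCol j : ℕ) = j - (l+1)) := by
  have := j.isLt
  obtain hp | hp := Nat.mod_two_eq_zero_or_one (l-1) <;>
    simp only [wtildenCol, hp, zero_ne_one, if_true, if_false, true_and, false_and] <;>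
    split_ifs <;> omega

theorem wtilden_apply (k j : Fin (2*l)) :
    wtilden F l (l-1) k j = if k = wtildenCol j then 1 else 0 := by
  have := k.isLt; have := j.isLt
  obtain hp | hp := Nat.mod_two_eq_zero_or_one (l-1) <;>
    simp only [wtilden, wtildenCol, hp, zero_ne_one, if_true, if_false, Matrix.of_apply,
      Fin.ext_iff] <;>
    split_ifs <;> first | rfl | omega

def wtildelpCol (j : Fin (2*l)) : Fin (2*l) :=
  ⟨if l % 2 = 0 then (if (j : ℕ) < l then j + l else j - l)
    else if (j : ℕ) = 0 then l-1
    else if (j : ℕ) < l then j + l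
    else if (j : ℕ) = 2*l-1 then l
    else j - l, by have := j.isLt; split_ifs <;> omega⟩

theorem wtildelpCol_spec (j : Fin (2*l)) :
    (l % 2 = 0 ∧ (j : ℕ) < l ∧ (wtildelpCol j : ℕ) = j + l) ∨
    (l % 2 = 0 ∧ l ≤ (j : ℕ) ∧ (wtildelpCol j : ℕ) = j - l) ∨
    (l % 2 = 1 ∧ (j : ℕ) = 0 ∧ (wtildelpCol j : ℕ) = l - 1) ∨
    (l % 2 = 1 ∧ 0 < (j : ℕ) ∧ (j : ℕ) < l ∧ (wtildelpCol j : ℕ) = j + l) ∨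
    (l % 2 = 1 ∧ (j : ℕ) + 1 = 2*l ∧ (wtildelpCol j : ℕ) = l) ∨
    (l % 2 = 1 ∧ l ≤ (j : ℕ) ∧ (j : ℕ) + 1 < 2*l ∧ (wtildelpCol j : ℕ) = j - l) := by
  have := j.isLt
  obtain hp | hp := Nat.mod_two_eq_zero_or_one l <;>
    simp only [wtildelpCol, hp, one_ne_zero, if_true, if_false, true_and, false_and,
      false_or] <;>
    split_ifs <;> omega

theorem wtildelp_apply (k j : Fin (2*l)) :
    wtildelp F l k j = if k = wtildelpCol j then 1 else 0 := by
  have := k.isLt; have := j.isLt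
  obtain hp | hp := Nat.mod_two_eq_zero_or_one l <;>
    simp only [wtildelp, wtildelpCol, hp, one_ne_zero, if_true, if_false, Matrix.of_apply,
      Fin.ext_iff] <;>
    split_ifs <;> first | rfl | omega

def wtildelCol (j : Fin (2*l)) : Fin (2*l) :=
  if l % 2 = 0 then wtildelpCol j else midSwap (wtildelpCol (midSwap j))

theorem wtildel_apply (k j : Fin (2*l)) :
    wtildel F l k j = if k = wtildelCol j then 1 else 0 := by
  by_cases hl : l % 2 = 0
  · rw [wtildel, wtildelCol, if_pos hl, if_pos hl, wtildelp_apply]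
  · rw [wtildel, wtildelCol, if_neg hl, if_neg hl, cmat_conj_apply, wtildelp_apply]
    exact if_congr (midSwap_eq_iff _ _) rfl rfl

theorem tmat_apply {n : ℕ} {x : Matrix (Fin n) (Fin n) F} (hx : IsPermMatrix x)
    (i k : Fin (2*l)) :
    tmat F l n x i k =
      if (i : ℕ) < n ∧ (k : ℕ) < n then ent x i k
      else if 2*l-n ≤ (i : ℕ) ∧ 2*l-n ≤ (k : ℕ) then ent x (2*l-1-i) (2*l-1-k)
      else if i = k then 1 else 0 := by
  simp only [tmat, Matrix.of_apply]
  split_ifs <;> try rfl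
  have := i.isLt; have := k.isLt
  rw [ent, ent, dif_pos (by omega), dif_pos (by omega), hx.astar_apply_s9]
  congr 1 <;> ext <;> simp only [Fin.val_rev] <;> omega

def cornerShift (k : Fin (2*l)) : Fin (2*l) :=
  ⟨if (k : ℕ) = 0 then l-1
    else if (k : ℕ) < l then k-1
    else if (k : ℕ) + 1 < 2*l then k+1
    else l, by have := k.isLt; split_ifs <;> omega⟩

theorem cornerShift_spec (k : Fin (2*l)) :
    ((k : ℕ) = 0 ∧ (cornerShift k : ℕ) = l-1) ∨
    (0 < (k : ℕ) ∧ (k : ℕ) < l ∧ (cornerShift k : ℕ) = k - 1) ∨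
    (l ≤ (k : ℕ) ∧ (k : ℕ) + 1 < 2*l ∧ (cornerShift k : ℕ) = k + 1) ∨
    ((k : ℕ) + 1 = 2*l ∧ (cornerShift k : ℕ) = l) := by
  have := k.isLt
  simp only [cornerShift]; split_ifs <;> omega

theorem tmat_cornerForm_apply (hl : 0 < l) {ω : Matrix (Fin (l-1)) (Fin (l-1)) F}
    (hω : IsPermMatrix ω) (i k : Fin (2*l)) :
    tmat F l l (cornerForm F l ω) i k = tmat F l (l-1) ω i (cornerShift k) := by
  rw [tmat_apply hω, tmat_apply (isPermMatrix_cornerForm hl hω)]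
  have := i.isLt; have := cornerShift_spec k
  simp only [ent_cornerForm hl, Fin.ext_iff]
  split_ifs <;> first | rfl | omega | exact dif_neg (by omega) | (congr 1; omega)

theorem wtildenCol_eq_cornerShift (j : Fin (2*l)) : wtildenCol j = cornerShift (wtildelCol j) := by
  have := wtildenCol_spec j; have := cornerShift_spec (wtildelCol j)
  ext
  unfold wtildelCol at *
  split_ifs at *
  · have := wtildelpCol_spec j
    omega
  · have := midSwap_spec j; have := wtildelpCol_spec (midSwap j)
    have := midSwap_spec (wtildelpCol (midSwap j))
    omega

theorem tmat_mul_wtilden_eq (hl : 0 < l) {ω : Matrix (Fin (l-1)) (Fin (l-1)) F}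
    (hω : IsPermMatrix ω) :
    tmat F l (l-1) ω * wtilden F l (l-1) = tmat F l l (cornerForm F l ω) * wtildel F l := by
  ext i j
  rw [mul_apply_eq_of_col _ wtilden_apply, mul_apply_eq_of_col _ wtildel_apply,
    tmat_cornerForm_apply hl hω, wtildenCol_eq_cornerShift]

theorem cmat_conj_tmat (x : Matrix (Fin (l-1)) (Fin (l-1)) F) :
    cmat F l * tmat F l (l-1) x * cmat F l = tmat F l (l-1) x := by
  ext i j
  have := i.isLt; have := j.isLt; have := midSwap_spec i; have := midSwap_spec j
  rw [cmat_conj_apply]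
  simp only [tmat, Matrix.of_apply, Fin.ext_iff]
  split_ifs <;> first | rfl | omega | (congr 1 <;> omega)

theorem cmat_conj_wtilden : cmat F l * wtilden F l (l-1) * cmat F l = wtilden F l (l-1) := by
  ext i j
  rw [cmat_conj_apply, wtilden_apply, wtilden_apply]
  refine if_congr ?_ rfl rfl
  rw [midSwap_eq_iff, Fin.ext_iff, Fin.ext_iff]
  have := midSwap_spec j; have := wtildenCol_spec (midSwap j)
  have := midSwap_spec (wtildenCol (midSwap j)); have := wtildenCol_spec j
  omega

theorem cmat_conj_tmat_mul_wtilden (x : Matrix (Fin (l-1)) (Fin (l-1)) F) :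
    cmat F l * (tmat F l (l-1) x * wtilden F l (l-1)) * cmat F l
      = tmat F l (l-1) x * wtilden F l (l-1) := by
  conv_rhs => rw [← cmat_conj_tmat x, ← cmat_conj_wtilden]
  simp only [Matrix.mul_assoc, ← Matrix.mul_assoc (cmat F l) (cmat F l), cmat_mul_self,
    Matrix.one_mul]

theorem wtildelCol_add_self {k : ℕ} (hk0 : 0 < k) (hk : k < l) :
    wtildelCol (⟨k + l, by omega⟩ : Fin (2*l)) = ⟨k, by omega⟩ := by
  ext
  have := wtildelpCol_spec (⟨k + l, by omega⟩ : Fin (2*l))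
  unfold wtildelCol
  split_ifs
  · simp only at *; omega
  · have := midSwap_spec (⟨k + l, by omega⟩ : Fin (2*l))
    have := midSwap_spec (wtildelpCol (midSwap (⟨k + l, by omega⟩ : Fin (2*l))))
    have := wtildelpCol_spec (midSwap (⟨k + l, by omega⟩ : Fin (2*l)))
    simp only at *; omega

theorem apply_eq_one_of_cmat_conj (hl : 0 < l) {y : Matrix (Fin l) (Fin l) F}
    (hy : IsPermMatrix y)
    (h : cmat F l * (tmat F l l y * wtildel F l) * cmat F l = tmat F l l y * wtildel F l) :
    y ⟨l-1, by omega⟩ ⟨0, hl⟩ = 1 := by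
  refine hy.apply_eq_one_of_forall_ne fun ⟨k, hk⟩ hk0 => ?_
  replace hk0 : 0 < k := Nat.pos_of_ne_zero fun e => hk0 (Fin.ext e)
  have hs : midSwap (⟨l-1, by omega⟩ : Fin (2*l)) = ⟨l, by omega⟩ := by ext; simp [midSwap]
  have hs' : midSwap (⟨k + l, by omega⟩ : Fin (2*l)) = ⟨k + l, by omega⟩ := by
    ext; simp only [midSwap]; split_ifs <;> omega
  have := congrFun (congrFun h ⟨l-1, by omega⟩) ⟨k + l, by omega⟩
  rw [cmat_conj_apply, hs, hs', mul_apply_eq_of_col _ wtildel_apply,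
    mul_apply_eq_of_col _ wtildel_apply, wtildelCol_add_self hk0 hk, tmat_apply hy,
    tmat_apply hy] at this
  simp only [ent, Fin.ext_iff] at this
  split_ifs at this <;> first | omega | exact this.symm

end SOConverse

open SOConverse in
theorem Bsetlm1_characterization_general
    (F : Type) [Field F]
    (l : ℕ) (hl : 2 ≤ l)
    (w : Matrix (Fin (2*l)) (Fin (2*l)) F) :
    w ∈ Bsetlm1 F l ↔
      (w ∈ BesselSupport F l ∧ ∃ ω : Matrix (Fin (l-1)) (Fin (l-1)) F,
        IsPermMatrix ω ∧ w = tmat F l (l-1) ω * wtilden F l (l-1)) := by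
  have hl₀ : 0 < l := by omega
  constructor
  · rintro ⟨hB, ⟨y, hy, rfl⟩, hc⟩
    obtain ⟨ω, hω, rfl⟩ := hy.exists_eq_cornerForm hl₀ (apply_eq_one_of_cmat_conj hl₀ hy hc)
    exact ⟨hB, ω, hω, (tmat_mul_wtilden_eq hl₀ hω).symm⟩
  · rintro ⟨hB, ω, hω, rfl⟩
    exact ⟨hB, ⟨cornerForm F l ω, isPermMatrix_cornerForm hl₀ hω, tmat_mul_wtilden_eq hl₀ hω⟩,
      cmat_conj_tmat_mul_wtilden ω⟩

open SOConverse in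
/-- A Weyl element lies in `B_{l-1}(SO_{2l})` if and only if it lies in the Bessel support
and has the form `t_{l-1}(ω) w̃_{l-1}` for some `ω ∈ W(GL_{l-1})`. -/
theorem Bsetlm1_characterization
    (F : Type) [Field F] [Fintype F] (hF : ringChar F ≠ 2)
    (l : ℕ) (hl : 2 ≤ l)
    (w : Matrix (Fin (2*l)) (Fin (2*l)) F) :
    w ∈ Bsetlm1 F l ↔
      (w ∈ BesselSupport F l ∧ ∃ ω : Matrix (Fin (l-1)) (Fin (l-1)) F,
        IsPermMatrix ω ∧ w = tmat F l (l-1) ω * wtilden F l (l-1)) :=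
  Bsetlm1_characterization_general F l hl w
end
end
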